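/- arXiv:2512.16241 — 6 statements merged into one kernel-verified Lean document; each statement's English description precedes it below -/
import Mathlib

section
/- Let 0 < a < 1, let B ≥ 1 be an integer, and let A(t) = [a_{ij}(t)] (t ≥ 1) be N×N doubly stochastic matrices such that every entry a_{ij}(t) is either 0 or lies in (a, 1), and every diagonal entry satisfies a_{ii}(t) > a. Assume the time-varying graph is B-strongly connected: for every t ≥ 1, the directed graph on {1,…,N} whose edge set is E_B(t) = { (j,i) : a_{ij}(k) > 0 for some k with (t−1)B+1 ≤ k ≤ tB } is strongly connected (every node is reachable from every other node along directed edges). Define the state transition matrices Φ(t,s) = A(t−1)⋯A(s+1)A(s) for t > s and Φ(s,s) = I_N. Then for all i, j ∈ {1,…,N} and all t ≥ s ≥ 1: |[Φ(t,s)]_{ij} − 1/N| ≤ Ĉ τ^{t−s}, where Ĉ = 2(1 + a^{−(N−1)B})/(1 + a^{(N−1)B}) and τ = (1 − a^{(N−1)B})^{1/((N−1)B)} ∈ (0,1). -/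
open Finset
-- crossing lemma
lemma aux_crossing {α : Type*} (r : α → α → Prop) (S : Set α) :
    ∀ x y, Relation.TransGen r x y → x ∈ S → y ∉ S →
    ∃ u, u ∈ S ∧ ∃ v, v ∉ S ∧ r u v := by
  intro x y h
  induction h with
  | single h => exact fun hx hy => ⟨x, hx, _, hy, h⟩
  | @tail b c h1 h2 ih =>
    intro hx hy
    by_cases hb : b ∈ S
    · exact ⟨b, hb, _, hy, h2⟩
    · exact ih hx hb

lemma aux_wsum_le_sup {N : ℕ} (ne : (univ : Finset (Fin N)).Nonempty) (w x : Fin N → ℝ)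
    (hw0 : ∀ k, 0 ≤ w k) (hw1 : ∑ k, w k = 1) :
    ∑ k, w k * x k ≤ univ.sup' ne x := by
  calc ∑ k, w k * x k ≤ ∑ k, w k * univ.sup' ne x := by
        apply sum_le_sum; intro k _
        exact mul_le_mul_of_nonneg_left (le_sup' x (mem_univ k)) (hw0 k)
    _ = univ.sup' ne x := by rw [← sum_mul, hw1, one_mul]

lemma aux_inf_le_wsum {N : ℕ} (ne : (univ : Finset (Fin N)).Nonempty) (w x : Fin N → ℝ)
    (hw0 : ∀ k, 0 ≤ w k) (hw1 : ∑ k, w k = 1) :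
    univ.inf' ne x ≤ ∑ k, w k * x k := by
  calc univ.inf' ne x = ∑ k, w k * univ.inf' ne x := by rw [← sum_mul, hw1, one_mul]
    _ ≤ ∑ k, w k * x k := by
        apply sum_le_sum; intro k _
        exact mul_le_mul_of_nonneg_left (inf'_le x (mem_univ k)) (hw0 k)

lemma aux_wsum_le_eps {N : ℕ} (ne : (univ : Finset (Fin N)).Nonempty) (w x : Fin N → ℝ)
    (ε : ℝ) (hε : 0 ≤ ε)
    (hw0 : ∀ k, 0 ≤ w k) (hw1 : ∑ k, w k = 1) (hwε : ∀ k, ε ≤ w k) :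
    ∑ k, w k * x k ≤ univ.sup' ne x - ε * (univ.sup' ne x - univ.inf' ne x) := by
  obtain ⟨k₀, -, hk₀⟩ := Finset.exists_mem_eq_inf' ne x
  set m := univ.inf' ne x with hm
  set M := univ.sup' ne x with hM
  have hmM : m ≤ M := le_trans (inf'_le x (mem_univ k₀)) (le_sup' x (mem_univ k₀))
  have h1 : ∑ k, w k * x k = w k₀ * x k₀ + ∑ k ∈ univ.erase k₀, w k * x k :=
    (Finset.add_sum_erase _ _ (mem_univ k₀)).symm
  have h2 : ∑ k ∈ univ.erase k₀, w k * x k ≤ ∑ k ∈ univ.erase k₀, w k * M := by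
    apply sum_le_sum; intro k _
    exact mul_le_mul_of_nonneg_left (le_sup' x (mem_univ k)) (hw0 k)
  have h3 : ∑ k ∈ univ.erase k₀, w k * M = (1 - w k₀) * M := by
    rw [← sum_mul, Finset.sum_erase_eq_sub (mem_univ k₀), hw1]
  have h4 : ε ≤ w k₀ := hwε k₀
  have h5 : x k₀ = m := hk₀.symm
  nlinarith [hw0 k₀]

section
variable {N : ℕ} (a : ℝ) (A : ℕ → Matrix (Fin N) (Fin N) ℝ)
  (Φ : ℕ → ℕ → Matrix (Fin N) (Fin N) ℝ)

lemma phi_basic (ha0 : 0 < a)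
    (hA_row : ∀ t, 1 ≤ t → ∀ i, ∑ j, A t i j = 1)
    (hA_col : ∀ t, 1 ≤ t → ∀ j, ∑ i, A t i j = 1)
    (hA_entry : ∀ t, 1 ≤ t → ∀ i j, A t i j = 0 ∨ (a < A t i j ∧ A t i j < 1))
    (hΦ_refl : ∀ s, Φ s s = 1)
    (hΦ_rec : ∀ t s, s ≤ t → Φ (t + 1) s = A t * Φ t s) :
    ∀ s t, 1 ≤ s → s ≤ t →
      (∀ i j, 0 ≤ Φ t s i j) ∧ (∀ i, ∑ j, Φ t s i j = 1) ∧ (∀ j, ∑ i, Φ t s i j = 1) := by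
  have hA0 : ∀ t, 1 ≤ t → ∀ i j, 0 ≤ A t i j := by
    intro t ht i j
    rcases hA_entry t ht i j with h | h
    · exact le_of_eq h.symm
    · exact le_of_lt (lt_trans ha0 h.1)
  intro s t hs hst
  induction t, hst using Nat.le_induction with
  | base =>
    rw [hΦ_refl]
    refine ⟨fun i j => ?_, fun i => ?_, fun j => ?_⟩
    · by_cases h : i = j <;> simp [Matrix.one_apply, h]
    · simp [Matrix.one_apply]
    · simp [Matrix.one_apply]
  | succ t ht ih =>
    obtain ⟨ih0, ihr, ihc⟩ := ih
    have ht1 : 1 ≤ t := le_trans hs ht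
    rw [hΦ_rec t s ht]
    refine ⟨fun i j => ?_, fun i => ?_, fun j => ?_⟩
    · rw [Matrix.mul_apply]
      exact Finset.sum_nonneg fun k _ => mul_nonneg (hA0 t ht1 i k) (ih0 k j)
    · simp only [Matrix.mul_apply]
      rw [Finset.sum_comm]
      calc ∑ k, ∑ j, A t i k * Φ t s k j = ∑ k, A t i k * ∑ j, Φ t s k j := by
            simp [Finset.mul_sum]
        _ = 1 := by simp only [ihr, mul_one]; exact hA_row t ht1 i
    · simp only [Matrix.mul_apply]
      rw [Finset.sum_comm]
      calc ∑ k, ∑ i, A t i k * Φ t s k j = ∑ k, (∑ i, A t i k) * Φ t s k j := by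
            simp [Finset.sum_mul]
        _ = 1 := by
            have : ∀ k, (∑ i, A t i k) = 1 := hA_col t ht1
            simp only [this, one_mul]; exact ihc j

lemma phi_comp
    (hΦ_refl : ∀ s, Φ s s = 1)
    (hΦ_rec : ∀ t s, s ≤ t → Φ (t + 1) s = A t * Φ t s) :
    ∀ s u t, s ≤ u → u ≤ t → Φ t s = Φ t u * Φ u s := by
  intro s u t hsu hut
  induction t, hut using Nat.le_induction with
  | base => rw [hΦ_refl u, Matrix.one_mul]
  | succ t ht ih =>
    rw [hΦ_rec t s (le_trans hsu ht), hΦ_rec t u ht, ih, Matrix.mul_assoc]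

lemma phi_persist (ha0 : 0 < a)
    (hA_entry : ∀ t, 1 ≤ t → ∀ i j, A t i j = 0 ∨ (a < A t i j ∧ A t i j < 1))
    (hA_diag : ∀ t, 1 ≤ t → ∀ i, a < A t i i)
    (hΦnn : ∀ s t, 1 ≤ s → s ≤ t → ∀ i j, 0 ≤ Φ t s i j)
    (hΦ_rec : ∀ t s, s ≤ t → Φ (t + 1) s = A t * Φ t s) :
    ∀ s t₀ t, 1 ≤ s → s ≤ t₀ → t₀ ≤ t → ∀ v j (c : ℝ), 0 ≤ c → c ≤ Φ t₀ s v j →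
      a ^ (t - t₀) * c ≤ Φ t s v j := by
  have hA0 : ∀ t, 1 ≤ t → ∀ i j, 0 ≤ A t i j := by
    intro t ht i j
    rcases hA_entry t ht i j with h | h
    · exact le_of_eq h.symm
    · exact le_of_lt (lt_trans ha0 h.1)
  intro s t₀ t hs hst₀ ht₀t v j c hc hΦc
  induction t, ht₀t using Nat.le_induction with
  | base => simpa using hΦc
  | succ t ht ih =>
    have hst : s ≤ t := le_trans hst₀ ht
    have ht1 : 1 ≤ t := le_trans hs hst
    rw [hΦ_rec t s hst]
    rw [Matrix.mul_apply]
    have key : A t v v * Φ t s v j ≤ ∑ k, A t v k * Φ t s k j := by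
      apply Finset.single_le_sum (f := fun k => A t v k * Φ t s k j)
        (fun k _ => mul_nonneg (hA0 t ht1 v k) (hΦnn s t hs hst k j)) (mem_univ v)
    refine le_trans ?_ key
    have h1 : a ^ (t - t₀) * c ≤ Φ t s v j := ih
    have h2 : a < A t v v := hA_diag t ht1 v
    have he : t + 1 - t₀ = (t - t₀) + 1 := by omega
    rw [he, pow_succ]
    calc a ^ (t - t₀) * a * c = a * (a ^ (t - t₀) * c) := by ring
      _ ≤ A t v v * Φ t s v j := by
          apply mul_le_mul (le_of_lt h2) h1 (by positivity) (hA0 t ht1 v v)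

lemma phi_edge (ha0 : 0 < a)
    (hA_entry : ∀ t, 1 ≤ t → ∀ i j, A t i j = 0 ∨ (a < A t i j ∧ A t i j < 1))
    (hΦnn : ∀ s t, 1 ≤ s → s ≤ t → ∀ i j, 0 ≤ Φ t s i j)
    (hΦ_rec : ∀ t s, s ≤ t → Φ (t + 1) s = A t * Φ t s) :
    ∀ s k, 1 ≤ s → s ≤ k → ∀ p q j (c : ℝ), 0 < A k q p → 0 ≤ c → c ≤ Φ k s p j →
      a * c ≤ Φ (k + 1) s q j := by
  have hA0 : ∀ t, 1 ≤ t → ∀ i j, 0 ≤ A t i j := by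
    intro t ht i j
    rcases hA_entry t ht i j with h | h
    · exact le_of_eq h.symm
    · exact le_of_lt (lt_trans ha0 h.1)
  intro s k hs hsk p q j c hApos hc hΦc
  have hk1 : 1 ≤ k := le_trans hs hsk
  have haA : a < A k q p := by
    rcases hA_entry k hk1 q p with h | h
    · exact absurd h (ne_of_gt hApos)
    · exact h.1
  rw [hΦ_rec k s hsk, Matrix.mul_apply]
  have key : A k q p * Φ k s p j ≤ ∑ l, A k q l * Φ k s l j :=
    Finset.single_le_sum (f := fun l => A k q l * Φ k s l j)
      (fun l _ => mul_nonneg (hA0 k hk1 q l) (hΦnn s k hs hsk l j)) (mem_univ p)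
  refine le_trans ?_ key
  exact mul_le_mul (le_of_lt haA) hΦc hc (hA0 k hk1 q p)

end

section
variable {N B : ℕ} {a : ℝ} {A : ℕ → Matrix (Fin N) (Fin N) ℝ}
  {Φ : ℕ → ℕ → Matrix (Fin N) (Fin N) ℝ}


lemma phi_pos (hN2 : 2 ≤ N) (hB : 1 ≤ B) (ha0 : 0 < a)
    (hconn : ∀ t, 1 ≤ t → ∀ i j : Fin N,
      Relation.TransGen
        (fun u v : Fin N => ∃ k, (t - 1) * B + 1 ≤ k ∧ k ≤ t * B ∧ 0 < A k v u) i j)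
    (hΦ_refl : ∀ s, Φ s s = 1)
    (hΦ_rec : ∀ t s, s ≤ t → Φ (t + 1) s = A t * Φ t s)
    (hΦnn : ∀ s t, 1 ≤ s → s ≤ t → ∀ i j, 0 ≤ Φ t s i j)
    (hpersist : ∀ s t₀ t, 1 ≤ s → s ≤ t₀ → t₀ ≤ t → ∀ v j (c : ℝ), 0 ≤ c → c ≤ Φ t₀ s v j →
      a ^ (t - t₀) * c ≤ Φ t s v j)
    (hedge : ∀ s k, 1 ≤ s → s ≤ k → ∀ p q j (c : ℝ), 0 < A k q p → 0 ≤ c → c ≤ Φ k s p j →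
      a * c ≤ Φ (k + 1) s q j)
    (r' : ℕ) (j : Fin N) :
    ∀ v, a ^ ((N - 1) * B) ≤ Φ ((r' * B + 1) + (N - 1) * B) (r' * B + 1) v j := by
  classical
  set s := r' * B + 1 with hs_def
  have hs : 1 ≤ s := by omega
  set S : ℕ → Finset (Fin N) := fun t => univ.filter (fun v => a ^ (t - s) ≤ Φ t s v j) with hS_def
  have hmono : ∀ t₀ t, s ≤ t₀ → t₀ ≤ t → S t₀ ⊆ S t := by
    intro t₀ t h1 h2 v hv
    simp only [hS_def, mem_filter, mem_univ, true_and] at hv ⊢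
    have := hpersist s t₀ t hs h1 h2 v j (a ^ (t₀ - s)) (by positivity) hv
    calc a ^ (t - s) = a ^ (t - t₀) * a ^ (t₀ - s) := by
          rw [← pow_add]; congr 1; omega
      _ ≤ Φ t s v j := this
  have hj : j ∈ S s := by
    simp only [hS_def, mem_filter, mem_univ, true_and, Nat.sub_self, pow_zero]
    rw [hΦ_refl s]
    simp [Matrix.one_apply]
  have growth : ∀ m : ℕ, min (m + 1) N ≤ (S (s + m * B)).card := by
    intro m
    induction m with
    | zero =>
      have : j ∈ S (s + 0 * B) := by simpa using hj
      have h1 : 1 ≤ (S (s + 0 * B)).card := Finset.card_pos.mpr ⟨j, this⟩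
      omega
    | succ m ih =>
      set u := s + m * B with hu_def
      set u' := s + (m + 1) * B with hu'_def
      have hsu : s ≤ u := by omega
      have huu' : u ≤ u' := by simp only [hu_def, hu'_def, Nat.succ_mul]; omega
      by_cases hall : S u = univ
      · have h1 : S u' = univ := Finset.eq_univ_of_forall fun v => hmono u u' hsu huu'
          (hall ▸ mem_univ v)
        rw [h1, Finset.card_univ, Fintype.card_fin]
        omega
      · obtain ⟨y, hy⟩ : ∃ y, y ∉ S u := by
          by_contra h
          push_neg at h
          exact hall (Finset.eq_univ_of_forall h)
        have hju : j ∈ S u := hmono s u le_rfl hsu hj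
        have hcon := hconn (r' + m + 1) (by omega) j y
        have hblock : (r' + m + 1 - 1) * B + 1 = u := by
          rw [Nat.add_sub_cancel, Nat.add_mul]
          simp only [hu_def, hs_def]
          omega
        have hblock2 : (r' + m + 1) * B = u' - 1 := by
          simp only [hu'_def, hs_def, Nat.add_mul, Nat.succ_mul]
          omega
        obtain ⟨p, hp, q, hq, k, hk1, hk2, hApos⟩ :=
          aux_crossing _ (fun v => v ∈ S u) j y hcon hju hy
        rw [hblock] at hk1
        rw [hblock2] at hk2
        -- p ∈ S u : a^(u-s) ≤ Φ u s p j
        simp only [hS_def, mem_filter, mem_univ, true_and] at hp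
        have hsk : s ≤ k := le_trans hsu hk1
        have hΦk : a ^ (k - s) ≤ Φ k s p j := by
          have := hpersist s u k hs hsu hk1 p j (a ^ (u - s)) (by positivity) hp
          calc a ^ (k - s) = a ^ (k - u) * a ^ (u - s) := by
                rw [← pow_add]; congr 1; omega
            _ ≤ Φ k s p j := this
        have hΦk1 : a ^ (k + 1 - s) ≤ Φ (k + 1) s q j := by
          have := hedge s k hs hsk p q j (a ^ (k - s)) hApos (by positivity) hΦk
          calc a ^ (k + 1 - s) = a * a ^ (k - s) := by
                rw [← pow_succ']; congr 1; omega
            _ ≤ Φ (k + 1) s q j := this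
        have hk1u' : k + 1 ≤ u' := by omega
        have hqu' : q ∈ S u' := by
          simp only [hS_def, mem_filter, mem_univ, true_and]
          have := hpersist s (k + 1) u' hs (by omega) hk1u' q j (a ^ (k + 1 - s))
            (by positivity) hΦk1
          calc a ^ (u' - s) = a ^ (u' - (k + 1)) * a ^ (k + 1 - s) := by
                rw [← pow_add]; congr 1; omega
            _ ≤ Φ u' s q j := this
        have hss : S u ⊂ S u' := by
          refine ⟨hmono u u' hsu huu', fun h => hq (h hqu')⟩
        have hcard : (S u).card < (S u').card := Finset.card_lt_card hss
        have hcardN : (S u).card < N := by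
          have h1 : (S u).card ≤ N := by
            have := Finset.card_le_univ (S u)
            simpa using this
          rcases lt_or_eq_of_le h1 with h | h
          · exact h
          · exact absurd (Finset.eq_univ_of_card _ (by simpa using h)) hall
        omega
  have hfinal := growth (N - 1)
  have hNm : min (N - 1 + 1) N = N := by omega
  rw [hNm] at hfinal
  have huniv : S (s + (N - 1) * B) = univ := by
    apply Finset.eq_univ_of_card
    have := Finset.card_le_univ (S (s + (N - 1) * B))
    simp only [Finset.card_univ, Fintype.card_fin] at this ⊢
    omega
  intro v
  have hv : v ∈ S (s + (N - 1) * B) := huniv ▸ mem_univ v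
  simp only [hS_def, mem_filter, mem_univ, true_and, Nat.add_sub_cancel_left] at hv
  exact hv
end
lemma spread_mul {N : ℕ} (ne : (univ : Finset (Fin N)).Nonempty)
    (W M : Matrix (Fin N) (Fin N) ℝ) (ε : ℝ) (hε : 0 ≤ ε)
    (hW0 : ∀ i k, 0 ≤ W i k) (hW1 : ∀ i, ∑ k, W i k = 1) (hWε : ∀ i k, ε ≤ W i k)
    (j : Fin N) :
    univ.sup' ne (fun i => (W * M) i j) - univ.inf' ne (fun i => (W * M) i j) ≤
      (1 - ε) * (univ.sup' ne (fun i => M i j) - univ.inf' ne (fun i => M i j)) := by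
  set x : Fin N → ℝ := fun k => M k j with hx
  have hsup : univ.sup' ne (fun i => (W * M) i j) ≤
      univ.sup' ne x - ε * (univ.sup' ne x - univ.inf' ne x) := by
    apply Finset.sup'_le
    intro i _
    rw [Matrix.mul_apply]
    exact aux_wsum_le_eps ne (W i) x ε hε (hW0 i) (hW1 i) (hWε i)
  have hinf : univ.inf' ne x ≤ univ.inf' ne (fun i => (W * M) i j) := by
    apply Finset.le_inf'
    intro i _
    rw [Matrix.mul_apply]
    exact aux_inf_le_wsum ne (W i) x (hW0 i) (hW1 i)
  linarith

/-- Geometric mixing of the transition matrices of a `B`-strongly connected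
sequence of doubly stochastic matrices whose nonzero entries lie in `(a,1)` and whose diagonal
entries exceed `a`:  `|[Φ(t,s)]_{ij} − 1/N| ≤ Ĉ τ^{t−s}` with
`Ĉ = 2(1 + a^{−(N−1)B})/(1 + a^{(N−1)B})` and `τ = (1 − a^{(N−1)B})^{1/((N−1)B)} ∈ (0,1)`. -/
theorem stmt_2 (N B : ℕ) (hN : 0 < N) (hB : 1 ≤ B)
    (a : ℝ) (ha0 : 0 < a) (ha1 : a < 1)
    (A : ℕ → Matrix (Fin N) (Fin N) ℝ)
    (hA_row : ∀ t, 1 ≤ t → ∀ i, ∑ j, A t i j = 1)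
    (hA_col : ∀ t, 1 ≤ t → ∀ j, ∑ i, A t i j = 1)
    (hA_entry : ∀ t, 1 ≤ t → ∀ i j, A t i j = 0 ∨ (a < A t i j ∧ A t i j < 1))
    (hA_diag : ∀ t, 1 ≤ t → ∀ i, a < A t i i)
    -- `B`-strong connectivity: in the graph with edges `(j,i)` such that `a_{ij}(k) > 0`
    -- for some `k` with `(t−1)B + 1 ≤ k ≤ tB`, every node is reachable from every other node.
    (hconn : ∀ t, 1 ≤ t → ∀ i j : Fin N,
      Relation.TransGen
        (fun u v : Fin N => ∃ k, (t - 1) * B + 1 ≤ k ∧ k ≤ t * B ∧ 0 < A k v u) i j)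
    (Φ : ℕ → ℕ → Matrix (Fin N) (Fin N) ℝ)
    (hΦ_refl : ∀ s, Φ s s = 1)
    (hΦ_rec : ∀ t s, s ≤ t → Φ (t + 1) s = A t * Φ t s) :
    0 < (1 - a ^ ((N - 1) * B)) ^ ((1 : ℝ) / (((N - 1) * B : ℕ) : ℝ)) ∧
    (1 - a ^ ((N - 1) * B)) ^ ((1 : ℝ) / (((N - 1) * B : ℕ) : ℝ)) < 1 ∧
    ∀ t s, 1 ≤ s → s ≤ t → ∀ i j,
      |Φ t s i j - 1 / (N : ℝ)| ≤
        (2 * (1 + (a ^ ((N - 1) * B))⁻¹) / (1 + a ^ ((N - 1) * B))) *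
          ((1 - a ^ ((N - 1) * B)) ^ ((1 : ℝ) / (((N - 1) * B : ℕ) : ℝ))) ^ (t - s) := by
  classical
  -- N ≥ 2, else the hypotheses are contradictory
  rcases Nat.lt_or_ge N 2 with hNlt | hN2
  · exfalso
    have hN1 : N = 1 := by omega
    subst hN1
    have h1 := hA_row 1 le_rfl 0
    rw [Fin.sum_univ_one] at h1
    rcases hA_entry 1 le_rfl 0 0 with h | ⟨-, h⟩ <;> linarith
  have hA0 : ∀ t, 1 ≤ t → ∀ i j, 0 ≤ A t i j := by
    intro t ht i j
    rcases hA_entry t ht i j with h | h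
    · exact le_of_eq h.symm
    · exact le_of_lt (lt_trans ha0 h.1)
  -- a < 1/2
  have ha2 : a < 1 / 2 := by
    have hi0 : (0 : ℕ) < N := hN
    set i0 : Fin N := ⟨0, hN⟩ with hi0_def
    have hd : a < A 1 i0 i0 := hA_diag 1 le_rfl i0
    have hdlt : A 1 i0 i0 < 1 := by
      rcases hA_entry 1 le_rfl i0 i0 with h | h
      · linarith
      · exact h.2
    have hsum : ∑ j, A 1 i0 j = 1 := hA_row 1 le_rfl i0
    have hex : ∃ j, j ≠ i0 ∧ 0 < A 1 i0 j := by
      by_contra h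
      push_neg at h
      have hz : ∀ j ∈ Finset.univ.erase i0, A 1 i0 j = 0 := fun j hj =>
        le_antisymm (h j (Finset.ne_of_mem_erase hj)) (hA0 1 le_rfl i0 j)
      have : ∑ j, A 1 i0 j = A 1 i0 i0 := by
        rw [← Finset.add_sum_erase _ _ (mem_univ i0), Finset.sum_eq_zero hz, add_zero]
      linarith
    obtain ⟨j1, hj1, hj1pos⟩ := hex
    have hj1a : a < A 1 i0 j1 := by
      rcases hA_entry 1 le_rfl i0 j1 with h | h
      · linarith
      · exact h.1
    have h2 : A 1 i0 i0 + A 1 i0 j1 ≤ 1 := by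
      rw [← hsum, ← Finset.add_sum_erase _ _ (mem_univ i0)]
      have hj1' : j1 ∈ Finset.univ.erase i0 := Finset.mem_erase.mpr ⟨hj1, mem_univ _⟩
      have hle := Finset.single_le_sum (f := fun j => A 1 i0 j)
        (fun j _ => hA0 1 le_rfl i0 j) hj1'
      linarith
    linarith
  set T0 := (N - 1) * B with hT0_def
  have hT0pos : 0 < T0 := by
    have h1 : 1 * B ≤ (N - 1) * B := Nat.mul_le_mul_right B (by omega)
    omega
  set ε := a ^ T0 with hε_def
  have hε0 : 0 < ε := pow_pos ha0 T0
  have hεa : ε ≤ a := by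
    calc ε = a ^ T0 := rfl
      _ ≤ a ^ 1 := pow_le_pow_of_le_one ha0.le ha1.le hT0pos
      _ = a := pow_one a
  have hεhalf : ε < 1 / 2 := lt_of_le_of_lt hεa ha2
  have hε1 : ε < 1 := by linarith
  set τ := (1 - ε) ^ ((1 : ℝ) / ((T0 : ℕ) : ℝ)) with hτ_def
  have hT0R : (0 : ℝ) < ((T0 : ℕ) : ℝ) := by exact_mod_cast hT0pos
  have hτ0 : 0 < τ := Real.rpow_pos_of_pos (by linarith) _
  have hτ1 : τ < 1 := Real.rpow_lt_one (by linarith) (by linarith) (div_pos one_pos hT0R)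
  have hτT0 : τ ^ T0 = 1 - ε := by
    rw [hτ_def, ← Real.rpow_natCast ((1 - ε) ^ ((1 : ℝ) / ((T0 : ℕ) : ℝ))) T0,
      ← Real.rpow_mul (by linarith), one_div, inv_mul_cancel₀ hT0R.ne', Real.rpow_one]
  refine ⟨hτ0, hτ1, ?_⟩
  intro t s hs hst i j
  have hC : 2 * (1 + ε⁻¹) / (1 + ε) = 2 / ε := by
    field_simp
    ring
  rw [hC]
  -- basic facts about Φ
  have hbasic := phi_basic a A Φ ha0 hA_row hA_col hA_entry hΦ_refl hΦ_rec
  have hΦnn : ∀ s t, 1 ≤ s → s ≤ t → ∀ i j, 0 ≤ Φ t s i j :=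
    fun s t h1 h2 => (hbasic s t h1 h2).1
  have hΦrow : ∀ s t, 1 ≤ s → s ≤ t → ∀ i, ∑ j, Φ t s i j = 1 :=
    fun s t h1 h2 => (hbasic s t h1 h2).2.1
  have hΦcol : ∀ s t, 1 ≤ s → s ≤ t → ∀ j, ∑ i, Φ t s i j = 1 :=
    fun s t h1 h2 => (hbasic s t h1 h2).2.2
  have hpersist := phi_persist a A Φ ha0 hA_entry hA_diag hΦnn hΦ_rec
  have hedge := phi_edge a A Φ ha0 hA_entry hΦnn hΦ_rec
  have hpos := phi_pos hN2 hB ha0 hconn hΦ_refl hΦ_rec hΦnn hpersist hedge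
  have ne : (Finset.univ : Finset (Fin N)).Nonempty := ⟨i, mem_univ i⟩
  set d : ℕ → ℝ := fun t' => univ.sup' ne (fun i' => Φ t' s i' j)
    - univ.inf' ne (fun i' => Φ t' s i' j) with hd_def
  have hd0 : ∀ t', 0 ≤ d t' := by
    intro t'
    simp only [hd_def, sub_nonneg]
    exact le_trans (inf'_le (fun i' => Φ t' s i' j) (mem_univ i)) (le_sup' (fun i' => Φ t' s i' j) (mem_univ i))
  have hd1 : ∀ t', s ≤ t' → d t' ≤ 1 := by
    intro t' ht'
    simp only [hd_def]
    have hsup : univ.sup' ne (fun i' => Φ t' s i' j) ≤ 1 := by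
      apply Finset.sup'_le
      intro i' _
      calc Φ t' s i' j ≤ ∑ j', Φ t' s i' j' :=
            Finset.single_le_sum (fun j' _ => hΦnn s t' hs ht' i' j') (mem_univ j)
        _ = 1 := hΦrow s t' hs ht' i'
    have hinf : 0 ≤ univ.inf' ne (fun i' => Φ t' s i' j) :=
      Finset.le_inf' ne _ (fun i' _ => hΦnn s t' hs ht' i' j)
    linarith
  have hdmul : ∀ u t', s ≤ u → u ≤ t' → ∀ ε' : ℝ, 0 ≤ ε' →
      (∀ i' k, ε' ≤ Φ t' u i' k) → d t' ≤ (1 - ε') * d u := by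
    intro u t' hsu hut' ε' hε' hWε
    have hu1 : 1 ≤ u := le_trans hs hsu
    have hcomp : Φ t' s = Φ t' u * Φ u s := phi_comp A Φ hΦ_refl hΦ_rec s u t' hsu hut'
    simp only [hd_def, hcomp]
    exact spread_mul ne (Φ t' u) (Φ u s) ε' hε' (hΦnn u t' hu1 hut')
      (hΦrow u t' hu1 hut') hWε j
  have hdmono : ∀ u t', s ≤ u → u ≤ t' → d t' ≤ d u := by
    intro u t' h1 h2
    have := hdmul u t' h1 h2 0 le_rfl (fun i' k => hΦnn u t' (le_trans hs h1) h2 i' k)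
    simpa using this
  have hcontr : ∀ r', s ≤ r' * B + 1 → d (r' * B + 1 + T0) ≤ (1 - ε) * d (r' * B + 1) := by
    intro r' hr'
    exact hdmul (r' * B + 1) (r' * B + 1 + T0) hr' (by omega) ε hε0.le
      (fun i' k => hpos r' k i')
  -- |Φ t s i j - 1/N| ≤ d t
  have hcol : ∑ i', Φ t s i' j = 1 := hΦcol s t hs hst j
  have hNR : (0 : ℝ) < (N : ℝ) := by exact_mod_cast hN
  have hNinv : (N : ℝ) * (1 / (N : ℝ)) = 1 := by field_simp
  have hinfN : univ.inf' ne (fun i' => Φ t s i' j) ≤ 1 / (N : ℝ) := by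
    by_contra h
    push_neg at h
    have hlt : ∀ i' ∈ (univ : Finset (Fin N)), 1 / (N : ℝ) < Φ t s i' j :=
      fun i' _ => lt_of_lt_of_le h (inf'_le _ (mem_univ i'))
    have hsum := Finset.sum_lt_sum_of_nonempty ne hlt
    rw [Finset.sum_const, Finset.card_univ, Fintype.card_fin, nsmul_eq_mul, hNinv, hcol]
      at hsum
    exact lt_irrefl _ hsum
  have hsupN : 1 / (N : ℝ) ≤ univ.sup' ne (fun i' => Φ t s i' j) := by
    by_contra h
    push_neg at h
    have hlt : ∀ i' ∈ (univ : Finset (Fin N)), Φ t s i' j < 1 / (N : ℝ) :=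
      fun i' _ => lt_of_le_of_lt (le_sup' (fun i'' => Φ t s i'' j) (mem_univ i')) h
    have hsum := Finset.sum_lt_sum_of_nonempty ne hlt
    rw [Finset.sum_const, Finset.card_univ, Fintype.card_fin, nsmul_eq_mul, hNinv, hcol]
      at hsum
    exact lt_irrefl _ hsum
  have habs : |Φ t s i j - 1 / (N : ℝ)| ≤ d t := by
    simp only [hd_def]
    have h1 : Φ t s i j ≤ univ.sup' ne (fun i' => Φ t s i' j) := le_sup' (fun i' => Φ t s i' j) (mem_univ i)
    have h2 : univ.inf' ne (fun i' => Φ t s i' j) ≤ Φ t s i j := inf'_le _ (mem_univ i)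
    rw [abs_le]
    constructor <;> linarith
  -- block alignment
  set q := (s + B - 2) / B with hq_def
  set u₀ := q * B + 1 with hu₀_def
  have hdm : B * q + (s + B - 2) % B = s + B - 2 := by
    rw [hq_def]; exact Nat.div_add_mod _ _
  have hml : (s + B - 2) % B < B := Nat.mod_lt _ (by omega)
  have hqB : B * q = q * B := Nat.mul_comm B q
  have hsu₀ : s ≤ u₀ := by rw [hu₀_def, ← hqB]; omega
  have hu₀B : u₀ ≤ s + B - 1 := by rw [hu₀_def, ← hqB]; omega
  have hT0B : B ≤ T0 := by
    rw [hT0_def]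
    exact Nat.le_mul_of_pos_left B (by omega)
  have key : ∃ m : ℕ, |Φ t s i j - 1 / (N : ℝ)| ≤ (1 - ε) ^ m ∧ t - s ≤ (m + 2) * T0 := by
    rcases lt_or_ge t u₀ with hcase | hcase
    · refine ⟨0, ?_, ?_⟩
      · simpa using le_trans habs (hd1 t hst)
      · have h2T : (0 + 2) * T0 = T0 + T0 := by ring
        omega
    · set m := (t - u₀) / T0 with hm_def
      have hdm2 : T0 * m + (t - u₀) % T0 = t - u₀ := by
        rw [hm_def]; exact Nat.div_add_mod _ _
      have hml2 : (t - u₀) % T0 < T0 := Nat.mod_lt _ hT0pos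
      have hcomm : m * T0 = T0 * m := Nat.mul_comm m T0
      have hstep : ∀ k : ℕ, d (u₀ + k * T0) ≤ (1 - ε) ^ k := by
        intro k
        induction k with
        | zero => simpa using hd1 u₀ hsu₀
        | succ k ih =>
          have he2 : (q + k * (N - 1)) * B + 1 = u₀ + k * T0 := by
            rw [hu₀_def, hT0_def]; ring
          have hr' : s ≤ (q + k * (N - 1)) * B + 1 := by
            rw [he2]; omega
          have hc := hcontr (q + k * (N - 1)) hr'
          rw [he2] at hc
          have he3 : u₀ + (k + 1) * T0 = u₀ + k * T0 + T0 := by ring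
          rw [he3]
          calc d (u₀ + k * T0 + T0) ≤ (1 - ε) * d (u₀ + k * T0) := hc
            _ ≤ (1 - ε) * (1 - ε) ^ k := mul_le_mul_of_nonneg_left ih (by linarith)
            _ = (1 - ε) ^ (k + 1) := by ring
      refine ⟨m, ?_, ?_⟩
      · have hle : u₀ + m * T0 ≤ t := by rw [hcomm]; omega
        exact le_trans habs (le_trans (hdmono (u₀ + m * T0) t (by omega) hle) (hstep m))
      · have he4 : (m + 2) * T0 = T0 * m + T0 + T0 := by ring
        omega
  obtain ⟨m, h1, h2⟩ := key
  have hτmono : τ ^ (t - s) ≥ τ ^ ((m + 2) * T0) := pow_le_pow_of_le_one hτ0.le hτ1.le h2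
  have heq : τ ^ ((m + 2) * T0) = (1 - ε) ^ (m + 2) := by rw [mul_comm, pow_mul, hτT0]
  calc |Φ t s i j - 1 / (N : ℝ)| ≤ (1 - ε) ^ m := h1
    _ ≤ 2 / ε * τ ^ (t - s) := by
        have hpow0 : (0 : ℝ) ≤ (1 - ε) ^ m := pow_nonneg (by linarith) m
        have h3 : (1 : ℝ) ≤ 2 / ε * (1 - ε) ^ 2 := by
          rw [div_mul_eq_mul_div, le_div_iff₀ hε0]
          nlinarith
        have h4 : 2 / ε * τ ^ ((m + 2) * T0) ≤ 2 / ε * τ ^ (t - s) :=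
          mul_le_mul_of_nonneg_left hτmono (by positivity)
        calc (1 - ε) ^ m = (1 - ε) ^ m * 1 := (mul_one _).symm
          _ ≤ (1 - ε) ^ m * (2 / ε * (1 - ε) ^ 2) := mul_le_mul_of_nonneg_left h3 hpow0
          _ = 2 / ε * (1 - ε) ^ (m + 2) := by ring
          _ = 2 / ε * τ ^ ((m + 2) * T0) := by rw [heq]
          _ ≤ 2 / ε * τ ^ (t - s) := h4
end

section
/- Under the same hypotheses as the preceding statement (doubly stochastic A(t) with transition matrices satisfying |[Φ(t,s)]_{ij} − 1/N| ≤ Ĉ τ^{t−s} with Ĉ > 1, τ ∈ (0,1); ‖g_{i,t}(x)‖ ≤ C₁ on Ω_i; tracking updates z_{i,t} = Σ_j a_{ij}(t) y_{j,t}, y_{i,t+1} = z_{i,t} + N(g_{i,t+1}(x_{i,t+1}) − g_{i,t}(x_{i,t})), y_{i,1} = N g_{i,1}(x_{i,1})), define C = N Ĉ max_j ‖y_{j,1}‖ + 2N²τC₁Ĉ/(1−τ) + 3NC₁. Then for all i = 1,…,N and all t = 1,…,T: ‖y_{i,t}‖ ≤ C and ‖z_{i,t}‖ ≤ C. -/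
/-!
Unrolling the recursion with the transition matrices `Φ` writes
`z_{i,t} = ∑_j a_{ij}(t) y_{j,t}` as `∑_j Φ(t+1,1)_{ij} y_{j,1}` plus
`∑_{s<t} ∑_j Φ(t+1,s+1)_{ij} N (g_{j,s+1} − g_{j,s})`. With every entry of `Φ` replaced by `1/N`
these sums telescope to `∑_j g_{j,t}(x_{j,t})`, of norm at most `N C₁`; the deviations
`Φ − 1/N` decay like `Ĉ τ^{t−s}` and contribute at most `N Ĉ max_j ‖y_{j,1}‖` and
`2 N² Ĉ C₁ τ / (1 − τ)`. Finally `y_{i,t+1} = z_{i,t} + N (g_{i,t+1} − g_{i,t})` costs another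
`2 N C₁`.
-/

open Finset

theorem Matrix.sum_smul_sum_smul {ι R E : Type*} [Fintype ι] [Semiring R] [AddCommMonoid E]
    [Module R E] (B C : Matrix ι ι R) (v : ι → E) (i : ι) :
    ∑ j, B i j • ∑ k, C j k • v k = ∑ k, (B * C) i k • v k := by
  simp only [smul_sum, smul_smul, Matrix.mul_apply, sum_smul]
  exact sum_comm

theorem sum_smul_eq_smul_sum_add_sum_sub_smul {ι E : Type*} [Fintype ι] [AddCommGroup E]
    [Module ℝ E] (p : ι → ℝ) (c : ℝ) (v : ι → E) :
    ∑ j, p j • v j = c • ∑ j, v j + ∑ j, (p j - c) • v j := by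
  simp only [sub_smul, sum_sub_distrib, smul_sum]
  abel

theorem norm_sum_smul_le_of_abs_le {ι E : Type*} [Fintype ι] [SeminormedAddCommGroup E]
    [NormedSpace ℝ E] {p : ι → ℝ} {v : ι → E} {a b : ℝ} (hp : ∀ j, |p j| ≤ a)
    (hv : ∀ j, ‖v j‖ ≤ b) : ‖∑ j, p j • v j‖ ≤ Fintype.card ι * (a * b) := by
  calc ‖∑ j, p j • v j‖ ≤ ∑ j, ‖p j • v j‖ := norm_sum_le _ _
    _ ≤ ∑ _j : ι, a * b := sum_le_sum fun j _ => by
        rw [norm_smul, Real.norm_eq_abs]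
        exact mul_le_mul (hp j) (hv j) (norm_nonneg _) ((abs_nonneg _).trans (hp j))
    _ = Fintype.card ι * (a * b) := by simp

theorem norm_smul_sub_le_of_norm_le {E : Type*} [SeminormedAddCommGroup E] [NormedSpace ℝ E]
    {c b : ℝ} (hc : 0 ≤ c) {u v : E} (hu : ‖u‖ ≤ b) (hv : ‖v‖ ≤ b) :
    ‖c • (u - v)‖ ≤ c * (2 * b) := by
  rw [norm_smul, Real.norm_of_nonneg hc, two_mul]
  gcongr
  exact (norm_sub_le u v).trans (add_le_add hu hv)

theorem sum_Ico_one_pow_sub_le {τ : ℝ} (hτ0 : 0 ≤ τ) (hτ1 : τ < 1) (t : ℕ) :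
    ∑ s ∈ Ico 1 t, τ ^ (t - s) ≤ τ / (1 - τ) := by
  rw [sum_Ico_reflect _ _ (Nat.le_succ t), Nat.add_sub_cancel_left, Nat.add_sub_cancel]
  simpa using geom_sum_Ico_le_of_lt_one (m := 1) (n := t) hτ0 hτ1

theorem sum_smul_eq_sum_transition_smul {ι R E : Type*} [Fintype ι] [DecidableEq ι]
    [Semiring R] [AddCommMonoid E] [Module R E]
    {A : ℕ → Matrix ι ι R} {Φ : ℕ → ℕ → Matrix ι ι R}
    (hΦ_refl : ∀ s, Φ s s = 1) (hΦ_rec : ∀ t s, s ≤ t → Φ (t + 1) s = A t * Φ t s)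
    {y e : ι → ℕ → E} {t₀ T : ℕ}
    (hrec : ∀ i t, t₀ ≤ t → t < T → y i (t + 1) = ∑ j, A t i j • y j t + e i t)
    {t : ℕ} (ht₀ : t₀ ≤ t) (hT : t ≤ T) (i : ι) :
    ∑ j, A t i j • y j t =
      ∑ j, Φ (t + 1) t₀ i j • y j t₀ + ∑ s ∈ Ico t₀ t, ∑ j, Φ (t + 1) (s + 1) i j • e j s := by
  induction t, ht₀ using Nat.le_induction generalizing i with
  | base => simp [hΦ_rec t₀ t₀ le_rfl, hΦ_refl]
  | succ t ht ih =>
    have hnext : ∀ s, s ≤ t + 1 → Φ (t + 2) s = A (t + 1) * Φ (t + 1) s :=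
      fun s hs => hΦ_rec (t + 1) s hs
    have hfirst : ∑ j, Φ (t + 2) t₀ i j • y j t₀ =
        ∑ j, A (t + 1) i j • ∑ k, Φ (t + 1) t₀ j k • y k t₀ := by
      rw [Matrix.sum_smul_sum_smul, hnext _ (by omega)]
    have hmid : ∀ s ∈ Ico t₀ t, ∑ j, Φ (t + 2) (s + 1) i j • e j s =
        ∑ j, A (t + 1) i j • ∑ k, Φ (t + 1) (s + 1) j k • e k s := fun s hs => by
      rw [Matrix.sum_smul_sum_smul, hnext _ (by simp at hs; omega)]
    have hlast : ∑ j, Φ (t + 2) (t + 1) i j • e j t = ∑ j, A (t + 1) i j • e j t := by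
      rw [hnext _ le_rfl, hΦ_refl, mul_one]
    rw [sum_Ico_succ_top ht, hfirst, sum_congr rfl hmid, hlast, sum_comm (s := Ico t₀ t)]
    simp_rw [hrec _ t ht (by omega), ih (by omega), smul_add, sum_add_distrib, smul_sum]
    abel

section Tracking

variable {ι E : Type*} [Fintype ι] [DecidableEq ι] [NormedAddCommGroup E] [NormedSpace ℝ E]
  {A : ℕ → Matrix ι ι ℝ} {Φ : ℕ → ℕ → Matrix ι ι ℝ} {G y : ι → ℕ → E} {T : ℕ}

local notation "N" => (Fintype.card ι : ℝ)

theorem tracking_eq_sum_add_deviation [Nonempty ι]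
    (hΦ_refl : ∀ s, Φ s s = 1) (hΦ_rec : ∀ t s, s ≤ t → Φ (t + 1) s = A t * Φ t s)
    (hrec : ∀ i t, 1 ≤ t → t < T →
      y i (t + 1) = ∑ j, A t i j • y j t + N • (G i (t + 1) - G i t))
    (hy1 : ∀ i, y i 1 = N • G i 1) {t : ℕ} (ht : 1 ≤ t) (hT : t ≤ T) (i : ι) :
    ∑ j, A t i j • y j t = ∑ j, G j t + ∑ j, (Φ (t + 1) 1 i j - 1 / N) • y j 1 +
      ∑ s ∈ Ico 1 t, ∑ j, (Φ (t + 1) (s + 1) i j - 1 / N) • (N • (G j (s + 1) - G j s)) := by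
  have hN : N ≠ 0 := Nat.cast_ne_zero.2 Fintype.card_ne_zero
  have hsplit := fun p v => sum_smul_eq_smul_sum_add_sum_sub_smul (ι := ι) (E := E) p (1 / N) v
  have hcons : (1 / N) • ∑ j, y j 1 +
      ∑ s ∈ Ico 1 t, (1 / N) • ∑ j, N • (G j (s + 1) - G j s) = ∑ j, G j t := by
    simp_rw [hy1, ← smul_sum, smul_smul, one_div_mul_cancel hN, one_smul]
    rw [sum_comm, ← sum_add_distrib]
    exact sum_congr rfl fun j _ => by rw [sum_Ico_sub (G j) ht, add_sub_cancel]
  rw [sum_smul_eq_sum_transition_smul hΦ_refl hΦ_rec hrec ht hT, hsplit,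
    sum_congr rfl fun s _ => hsplit _ _, sum_add_distrib, ← hcons]
  abel

theorem norm_tracking_le [Nonempty ι]
    (hΦ_refl : ∀ s, Φ s s = 1) (hΦ_rec : ∀ t s, s ≤ t → Φ (t + 1) s = A t * Φ t s)
    {Chat τ C₁ M : ℝ} (hChat : 0 ≤ Chat) (hτ0 : 0 ≤ τ) (hτ1 : τ < 1) (hC₁ : 0 ≤ C₁)
    (hΦ_bound : ∀ t s, 1 ≤ s → s ≤ t → ∀ i j, |Φ t s i j - 1 / N| ≤ Chat * τ ^ (t - s))
    (hG : ∀ j s, 1 ≤ s → s ≤ T → ‖G j s‖ ≤ C₁)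
    (hrec : ∀ i t, 1 ≤ t → t < T →
      y i (t + 1) = ∑ j, A t i j • y j t + N • (G i (t + 1) - G i t))
    (hy1 : ∀ i, y i 1 = N • G i 1) (hM : ∀ j, ‖y j 1‖ ≤ M)
    {t : ℕ} (ht : 1 ≤ t) (hT : t ≤ T) (i : ι) :
    ‖∑ j, A t i j • y j t‖ ≤ N * Chat * M + 2 * N ^ 2 * τ * C₁ * Chat / (1 - τ) + N * C₁ := by
  have hΔG : ∀ j s, 1 ≤ s → s < T → ‖N • (G j (s + 1) - G j s)‖ ≤ N * (2 * C₁) :=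
    fun j s hs hsT => norm_smul_sub_le_of_norm_le (Nat.cast_nonneg _)
      (hG j _ (by omega) hsT) (hG j s hs hsT.le)
  have hconsensus : ‖∑ j, G j t‖ ≤ N * C₁ :=
    (norm_sum_le_of_le _ fun j _ => hG j t ht hT).trans_eq (by simp)
  have hinitial : ‖∑ j, (Φ (t + 1) 1 i j - 1 / N) • y j 1‖ ≤ N * (Chat * M) :=
    norm_sum_smul_le_of_abs_le (fun j => (hΦ_bound _ _ le_rfl (by omega) i j).trans
      (mul_le_of_le_one_right hChat (pow_le_one₀ hτ0 hτ1.le))) hM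
  have hincrements : ‖∑ s ∈ Ico 1 t, ∑ j, (Φ (t + 1) (s + 1) i j - 1 / N) •
      (N • (G j (s + 1) - G j s))‖ ≤ N * (Chat * (N * (2 * C₁))) * (τ / (1 - τ)) := by
    calc _ ≤ ∑ s ∈ Ico 1 t, N * (Chat * τ ^ (t - s) * (N * (2 * C₁))) := by
          refine (norm_sum_le _ _).trans (sum_le_sum fun s hs => ?_)
          rw [mem_Ico] at hs
          refine norm_sum_smul_le_of_abs_le (fun j => ?_) (fun j => hΔG j s hs.1 (by omega))
          simpa using hΦ_bound (t + 1) (s + 1) (by omega) (by omega) i j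
      _ = N * (Chat * (N * (2 * C₁))) * ∑ s ∈ Ico 1 t, τ ^ (t - s) := by
          rw [mul_sum]; exact sum_congr rfl fun s _ => by ring
      _ ≤ _ := by gcongr; exact sum_Ico_one_pow_sub_le hτ0 hτ1 t
  rw [tracking_eq_sum_add_deviation hΦ_refl hΦ_rec hrec hy1 ht hT]
  refine (norm_add₃_le ..).trans ?_
  calc _ ≤ N * C₁ + N * (Chat * M) + N * (Chat * (N * (2 * C₁))) * (τ / (1 - τ)) := by
        gcongr
    _ = _ := by
        field_simp
        ring

end Tracking

theorem stmt_4_general (N n T : ℕ) (hN : 0 < N)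
    (d : Fin N → ℕ)
    (Ω : ∀ i : Fin N, Set (EuclideanSpace ℝ (Fin (d i))))
    (Chat τ C₁ : ℝ) (hChat : 1 < Chat) (hτ0 : 0 < τ) (hτ1 : τ < 1) (hC₁ : 0 < C₁)
    (A : ℕ → Matrix (Fin N) (Fin N) ℝ)
    (Φ : ℕ → ℕ → Matrix (Fin N) (Fin N) ℝ)
    (hΦ_refl : ∀ s, Φ s s = 1)
    (hΦ_rec : ∀ t s, s ≤ t → Φ (t + 1) s = A t * Φ t s)
    (hΦ_bound : ∀ t s, 1 ≤ s → s ≤ t → ∀ i j,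
      |Φ t s i j - 1 / (N : ℝ)| ≤ Chat * τ ^ (t - s))
    (g : ∀ i : Fin N, ℕ → EuclideanSpace ℝ (Fin (d i)) → EuclideanSpace ℝ (Fin n))
    (hg : ∀ i t, 1 ≤ t → t ≤ T → ∀ w ∈ Ω i, ‖g i t w‖ ≤ C₁)
    (x : ∀ i : Fin N, ℕ → EuclideanSpace ℝ (Fin (d i)))
    (hx : ∀ i t, 1 ≤ t → t ≤ T → x i t ∈ Ω i)
    (y z : Fin N → ℕ → EuclideanSpace ℝ (Fin n))
    (hz : ∀ i t, 1 ≤ t → t ≤ T → z i t = ∑ j, A t i j • y j t)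
    (hy : ∀ i t, 1 ≤ t → t < T →
      y i (t + 1) = z i t + (N : ℝ) • (g i (t + 1) (x i (t + 1)) - g i t (x i t)))
    (hy1 : ∀ i, y i 1 = (N : ℝ) • g i 1 (x i 1)) :
    ∀ i, ∀ t, 1 ≤ t → t ≤ T →
      ‖y i t‖ ≤ N * Chat * (⨆ j, ‖y j 1‖) + 2 * N ^ 2 * τ * C₁ * Chat / (1 - τ) + 3 * N * C₁ ∧
      ‖z i t‖ ≤ N * Chat * (⨆ j, ‖y j 1‖) + 2 * N ^ 2 * τ * C₁ * Chat / (1 - τ) + 3 * N * C₁ := by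
  have : Nonempty (Fin N) := Fin.pos_iff_nonempty.1 hN
  set M := ⨆ j, ‖y j 1‖
  have hM : ∀ j, ‖y j 1‖ ≤ M := le_ciSup (Set.finite_range _).bddAbove
  set G : Fin N → ℕ → EuclideanSpace ℝ (Fin n) := fun j s => g j s (x j s)
  have hG : ∀ j s, 1 ≤ s → s ≤ T → ‖G j s‖ ≤ C₁ := fun j s h1 h2 => hg j s h1 h2 _ (hx j s h1 h2)
  have hz_le : ∀ i t, 1 ≤ t → t ≤ T →
      ‖z i t‖ ≤ N * Chat * M + 2 * N ^ 2 * τ * C₁ * Chat / (1 - τ) + N * C₁ := by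
    intro i t ht hT
    rw [hz i t ht hT]
    simpa using norm_tracking_le hΦ_refl hΦ_rec (by linarith) hτ0.le hτ1 hC₁.le
      (by simpa using hΦ_bound) hG (fun i t ht hT => by simp [hy i t ht hT, hz i t ht hT.le, G])
      (by simpa using hy1) hM ht hT i
  intro i t ht hT
  refine ⟨?_, (hz_le i t ht hT).trans (by nlinarith)⟩
  obtain rfl | ⟨s, hs, rfl⟩ : t = 1 ∨ ∃ s, 1 ≤ s ∧ t = s + 1 :=
    (eq_or_lt_of_le ht).imp Eq.symm fun h => ⟨t - 1, by omega, by omega⟩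
  · have hM0 : 0 ≤ M := Real.iSup_nonneg fun j => norm_nonneg _
    have hNChat : (1 : ℝ) ≤ N * Chat :=
      one_le_mul_of_one_le_of_one_le (by exact_mod_cast hN) hChat.le
    have hτ' : 0 < 1 - τ := sub_pos.2 hτ1
    have hrest : 0 ≤ 2 * N ^ 2 * τ * C₁ * Chat / (1 - τ) + 3 * N * C₁ := by positivity
    calc ‖y i 1‖ ≤ M := hM i
      _ ≤ N * Chat * M := le_mul_of_one_le_left hM0 hNChat
      _ ≤ _ := by linarith
  · have hincrement := norm_smul_sub_le_of_norm_le (Nat.cast_nonneg N)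
      (hG i (s + 1) (by omega) hT) (hG i s hs (by omega))
    have hzs := hz_le i s hs (by omega)
    rw [hy i s hs hT]
    linarith [norm_add_le (z i s) ((N : ℝ) • (G i (s + 1) - G i s))]

/-- Uniform boundedness of the constraint-tracking variables: with
`C = N Ĉ max_j ‖y_{j,1}‖ + 2N²τC₁Ĉ/(1−τ) + 3NC₁`, one has `‖y_{i,t}‖ ≤ C` and
`‖z_{i,t}‖ ≤ C` for all `i = 1, …, N` and `t = 1, …, T`. -/
theorem stmt_4 (N n T : ℕ) (hN : 0 < N)
    (d : Fin N → ℕ)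
    (Ω : ∀ i : Fin N, Set (EuclideanSpace ℝ (Fin (d i))))
    (Chat τ C₁ : ℝ) (hChat : 1 < Chat) (hτ0 : 0 < τ) (hτ1 : τ < 1) (hC₁ : 0 < C₁)
    (A : ℕ → Matrix (Fin N) (Fin N) ℝ)
    (hA_nonneg : ∀ t, 1 ≤ t → ∀ i j, 0 ≤ A t i j)
    (hA_row : ∀ t, 1 ≤ t → ∀ i, ∑ j, A t i j = 1)
    (hA_col : ∀ t, 1 ≤ t → ∀ j, ∑ i, A t i j = 1)
    (Φ : ℕ → ℕ → Matrix (Fin N) (Fin N) ℝ)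
    (hΦ_refl : ∀ s, Φ s s = 1)
    (hΦ_rec : ∀ t s, s ≤ t → Φ (t + 1) s = A t * Φ t s)
    (hΦ_bound : ∀ t s, 1 ≤ s → s ≤ t → ∀ i j,
      |Φ t s i j - 1 / (N : ℝ)| ≤ Chat * τ ^ (t - s))
    (g : ∀ i : Fin N, ℕ → EuclideanSpace ℝ (Fin (d i)) → EuclideanSpace ℝ (Fin n))
    (hg : ∀ i t, 1 ≤ t → t ≤ T → ∀ w ∈ Ω i, ‖g i t w‖ ≤ C₁)
    (x : ∀ i : Fin N, ℕ → EuclideanSpace ℝ (Fin (d i)))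
    (hx : ∀ i t, 1 ≤ t → t ≤ T → x i t ∈ Ω i)
    (y z : Fin N → ℕ → EuclideanSpace ℝ (Fin n))
    (hz : ∀ i t, 1 ≤ t → t ≤ T → z i t = ∑ j, A t i j • y j t)
    (hy : ∀ i t, 1 ≤ t → t < T →
      y i (t + 1) = z i t + (N : ℝ) • (g i (t + 1) (x i (t + 1)) - g i t (x i t)))
    (hy1 : ∀ i, y i 1 = (N : ℝ) • g i 1 (x i 1)) :
    ∀ i, ∀ t, 1 ≤ t → t ≤ T →
      ‖y i t‖ ≤ N * Chat * (⨆ j, ‖y j 1‖) + 2 * N ^ 2 * τ * C₁ * Chat / (1 - τ) + 3 * N * C₁ ∧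
      ‖z i t‖ ≤ N * Chat * (⨆ j, ‖y j 1‖) + 2 * N ^ 2 * τ * C₁ * Chat / (1 - τ) + 3 * N * C₁ :=
  stmt_4_general N n T hN d Ω Chat τ C₁ hChat hτ0 hτ1 hC₁ A Φ hΦ_refl hΦ_rec hΦ_bound g hg x hx y z
    hz hy hy1
end

section
/- Let A(t) = [a_{ij}(t)] (t = 1,…,T) be N×N doubly stochastic matrices, let C > 0, and let α_t > 0 and γ_t > 0 be sequences with γ_t non-increasing and α_t γ_t ≤ 1 for all t. Suppose λ_{i,t}, μ_{i,t}, z_{i,t} ∈ ℝⁿ satisfy: λ_{i,1} = 0, μ_{i,t} = Σ_{j=1}^N a_{ij}(t) λ_{j,t}, λ_{i,t+1} = [ μ_{i,t} + α_t ( z_{i,t} − γ_t μ_{i,t} ) ]₊ (componentwise positive part), and ‖z_{i,t}‖ ≤ C for all i and t. Then for all i and all t = 1,…,T: ‖μ_{i,t}‖ ≤ C/γ_t and ‖λ_{i,t}‖ ≤ C/γ_t. -/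
lemma my_norm_le_of_abs_le {n : ℕ} (x y : EuclideanSpace ℝ (Fin n))
    (h : ∀ k, |x k| ≤ |y k|) : ‖x‖ ≤ ‖y‖ := by
  rw [EuclideanSpace.norm_eq, EuclideanSpace.norm_eq]
  apply Real.sqrt_le_sqrt
  apply Finset.sum_le_sum
  intro k _
  simpa [Real.norm_eq_abs] using pow_le_pow_left₀ (abs_nonneg _) (h k) 2

/-- Boundedness of the dual variables via the regularization:
if `γ_t` is non-increasing, `α_t γ_t ≤ 1`, `λ_{i,1} = 0`, `μ_{i,t} = ∑_j a_{ij}(t) λ_{j,t}`,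
`λ_{i,t+1} = [μ_{i,t} + α_t (z_{i,t} − γ_t μ_{i,t})]₊` and `‖z_{i,t}‖ ≤ C`, then
`‖μ_{i,t}‖ ≤ C/γ_t` and `‖λ_{i,t}‖ ≤ C/γ_t` for all `i` and `t = 1, …, T`. -/
theorem stmt_5 (N n T : ℕ) (hN : 0 < N)
    (C : ℝ) (hC : 0 < C)
    (α γ : ℕ → ℝ)
    (hα_pos : ∀ t, 1 ≤ t → 0 < α t)
    (hγ_pos : ∀ t, 1 ≤ t → 0 < γ t)
    (hγ_mono : ∀ t, 1 ≤ t → γ (t + 1) ≤ γ t)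
    (hαγ : ∀ t, 1 ≤ t → α t * γ t ≤ 1)
    (A : ℕ → Matrix (Fin N) (Fin N) ℝ)
    (hA_nonneg : ∀ t, 1 ≤ t → t ≤ T → ∀ i j, 0 ≤ A t i j)
    (hA_row : ∀ t, 1 ≤ t → t ≤ T → ∀ i, ∑ j, A t i j = 1)
    (hA_col : ∀ t, 1 ≤ t → t ≤ T → ∀ j, ∑ i, A t i j = 1)
    (lam mu z : Fin N → ℕ → EuclideanSpace ℝ (Fin n))
    (hlam1 : ∀ i, lam i 1 = 0)
    (hmu : ∀ i t, 1 ≤ t → t ≤ T → mu i t = ∑ j, A t i j • lam j t)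
    (hlam : ∀ i t, 1 ≤ t → t < T → ∀ k : Fin n,
      lam i (t + 1) k = max (mu i t k + α t * (z i t k - γ t * mu i t k)) 0)
    (hz : ∀ i t, 1 ≤ t → t ≤ T → ‖z i t‖ ≤ C) :
    ∀ i, ∀ t, 1 ≤ t → t ≤ T →
      ‖mu i t‖ ≤ C / γ t ∧ ‖lam i t‖ ≤ C / γ t := by
  -- helper: lam bound at t implies mu bound at t
  have muBound : ∀ t, 1 ≤ t → t ≤ T → (∀ j, ‖lam j t‖ ≤ C / γ t) →
      ∀ i, ‖mu i t‖ ≤ C / γ t := by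
    intro t h1 h2 hl i
    rw [hmu i t h1 h2]
    calc ‖∑ j, A t i j • lam j t‖ ≤ ∑ j, ‖A t i j • lam j t‖ := norm_sum_le _ _
      _ = ∑ j, A t i j * ‖lam j t‖ := by
          refine Finset.sum_congr rfl fun j _ => ?_
          rw [norm_smul, Real.norm_eq_abs, abs_of_nonneg (hA_nonneg t h1 h2 i j)]
      _ ≤ ∑ j, A t i j * (C / γ t) :=
          Finset.sum_le_sum fun j _ =>
            mul_le_mul_of_nonneg_left (hl j) (hA_nonneg t h1 h2 i j)
      _ = C / γ t := by rw [← Finset.sum_mul, hA_row t h1 h2 i, one_mul]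
  have key : ∀ t, 1 ≤ t → t ≤ T → ∀ i, ‖lam i t‖ ≤ C / γ t := by
    intro t
    induction t with
    | zero => omega
    | succ s ih =>
      intro h1 h2 i
      rcases Nat.lt_or_ge 1 (s + 1) with hlt | hle
      · have hs1 : 1 ≤ s := by omega
        have hsT : s ≤ T := by omega
        have hsT' : s < T := by omega
        have hlb : ∀ j, ‖lam j s‖ ≤ C / γ s := ih hs1 hsT
        have hmub := muBound s hs1 hsT hlb
        set w : EuclideanSpace ℝ (Fin n) :=
          (1 - α s * γ s) • mu i s + (α s) • z i s with hw
        have hαnn : 0 ≤ α s := (hα_pos s hs1).le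
        have h1αγ : 0 ≤ 1 - α s * γ s := by linarith [hαγ s hs1]
        have hcomp : ∀ k, |lam i (s + 1) k| ≤ |w k| := by
          intro k
          rw [hlam i s hs1 hsT' k]
          have hwk : w k = mu i s k + α s * (z i s k - γ s * mu i s k) := by
            simp [hw]; ring
          rw [hwk]
          rw [abs_of_nonneg (le_max_right _ _)]
          exact max_le (le_abs_self _) (abs_nonneg _)
        have h1 : ‖lam i (s + 1)‖ ≤ ‖w‖ := my_norm_le_of_abs_le _ _ hcomp
        have h2' : ‖w‖ ≤ C / γ s := by
          have hγs := hγ_pos s hs1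
          calc ‖w‖ ≤ ‖(1 - α s * γ s) • mu i s‖ + ‖(α s) • z i s‖ := norm_add_le _ _
            _ = (1 - α s * γ s) * ‖mu i s‖ + α s * ‖z i s‖ := by
                rw [norm_smul, norm_smul, Real.norm_eq_abs, Real.norm_eq_abs,
                  abs_of_nonneg h1αγ, abs_of_nonneg hαnn]
            _ ≤ (1 - α s * γ s) * (C / γ s) + α s * C := by
                gcongr
                · exact hmub i
                · exact hz i s hs1 hsT
            _ = C / γ s := by field_simp; ring
        have hmono : C / γ s ≤ C / γ (s + 1) :=
          div_le_div_of_nonneg_left hC.le (hγ_pos (s + 1) (by omega)) (hγ_mono s hs1)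
        exact h1.trans (h2'.trans hmono)
      · have hs0 : s = 0 := by omega
        subst hs0
        rw [hlam1 i, norm_zero]
        exact le_of_lt (div_pos hC (hγ_pos 1 le_rfl))
  intro i t h1 h2
  exact ⟨muBound t h1 h2 (key t h1 h2) i, key t h1 h2 i⟩
end

section
/- Under the hypotheses of the preceding statement (doubly stochastic A(t) with |[Φ(t,s)]_{ij} − 1/N| ≤ Ĉ τ^{t−s}, Ĉ > 1, τ ∈ (0,1); λ_{i,1} = 0; μ_{i,t} = Σ_j a_{ij}(t) λ_{j,t}; λ_{i,t+1} = [μ_{i,t} + α_t(z_{i,t} − γ_t μ_{i,t})]₊; ‖z_{i,t} − γ_t μ_{i,t}‖ ≤ 2C; α_t non-increasing), let λ̄_t = (1/N) Σ_{i=1}^N λ_{i,t} and D = 2N²ĈC/(1−τ) + 2NC. Then Σ_{t=1}^T Σ_{i=1}^N ‖μ_{i,t} − λ̄_t‖ ≤ Σ_{t=1}^T Σ_{i=1}^N ‖λ_{i,t} − λ̄_t‖ ≤ D Σ_{t=1}^T α_t. -/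
/-!
Write `λ_{i,t+1} = μ_{i,t} + w_{i,t}`. Since `μ_{i,t} ≥ 0` and the projection onto the nonnegative
orthant is 1-Lipschitz, `‖w_{i,t}‖ ≤ 2Cα_t`. Unrolling the recursion from `λ_{·,1} = 0` gives
`λ_{i,t+1} = ∑_{s ≤ t} ∑_j Φ(t+1,s+1)_{ij} w_{j,s}`; every `Φ(t,s)` is doubly stochastic, so
subtracting the average replaces `Φ` by `Φ − 1/N`, whose entries are at most `Ĉτ^{t−s}`. Summing
over `t`, the geometric kernel costs a factor `1/(1−τ)`. The first inequality holds because `μ_{·,t}`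
is obtained from `λ_{·,t}` by a doubly stochastic averaging, which does not increase the total
distance to `λ̄_t`.
-/

open Finset Matrix

lemma EuclideanSpace.norm_le_norm_of_abs_le {ι : Type*} [Fintype ι] {x y : EuclideanSpace ℝ ι}
    (h : ∀ k, |x k| ≤ |y k|) : ‖x‖ ≤ ‖y‖ := by
  rw [EuclideanSpace.norm_eq, EuclideanSpace.norm_eq]
  gcongr with k
  simpa only [Real.norm_eq_abs] using h k

lemma EuclideanSpace.norm_sub_le_of_eq_max_add {ι : Type*} [Fintype ι]
    {x m d : EuclideanSpace ℝ ι} (hm : ∀ k, 0 ≤ m k) (hx : ∀ k, x k = max (m k + d k) 0) :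
    ‖x - m‖ ≤ ‖d‖ :=
  norm_le_norm_of_abs_le fun k => by
    simpa [hx, max_eq_left (hm k)] using abs_max_sub_max_le_abs (m k + d k) (m k) 0

lemma EuclideanSpace.norm_sub_le_of_eq_max_add_smul {ι : Type*} [Fintype ι]
    {x m v : EuclideanSpace ℝ ι} {a B : ℝ} (hm : ∀ k, 0 ≤ m k) (ha : 0 ≤ a) (hv : ‖v‖ ≤ B)
    (hx : ∀ k, x k = max (m k + a * v k) 0) : ‖x - m‖ ≤ B * a :=
  calc ‖x - m‖ ≤ ‖a • v‖ := norm_sub_le_of_eq_max_add hm fun k => by simp [hx]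
    _ ≤ B * a := by
      rw [norm_smul, Real.norm_of_nonneg ha, mul_comm]
      exact mul_le_mul_of_nonneg_right hv ha

lemma sum_Icc_pow_sub_le {τ : ℝ} (hτ0 : 0 ≤ τ) (hτ1 : τ < 1) (s T : ℕ) :
    ∑ t ∈ Icc (s + 1) T, τ ^ (t - 1 - s) ≤ (1 - τ)⁻¹ := by
  rw [← Ico_add_one_right_eq_Icc, sum_Ico_eq_sum_range, range_eq_Ico]
  simpa [add_tsub_cancel_left, add_comm, add_left_comm] using
    geom_sum_Ico_le_of_lt_one (m := 0) (n := T + 1 - (s + 1)) hτ0 hτ1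

lemma sum_Icc_sum_Icc_pow_mul_le {τ : ℝ} (hτ0 : 0 ≤ τ) (hτ1 : τ < 1) {a : ℕ → ℝ}
    (ha : ∀ s, 1 ≤ s → 0 ≤ a s) (T : ℕ) :
    ∑ t ∈ Icc 1 T, ∑ s ∈ Icc 1 (t - 1), τ ^ (t - 1 - s) * a s ≤
      (1 - τ)⁻¹ * ∑ s ∈ Icc 1 T, a s := by
  calc ∑ t ∈ Icc 1 T, ∑ s ∈ Icc 1 (t - 1), τ ^ (t - 1 - s) * a s
      = ∑ s ∈ Icc 1 T, (∑ t ∈ Icc (s + 1) T, τ ^ (t - 1 - s)) * a s := by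
        simp_rw [sum_mul]
        exact sum_comm' (by intro t s; simp only [mem_Icc]; omega)
    _ ≤ ∑ s ∈ Icc 1 T, (1 - τ)⁻¹ * a s := by
        gcongr with s hs
        · exact ha s (mem_Icc.1 hs).1
        · exact sum_Icc_pow_sub_le hτ0 hτ1 s T
    _ = (1 - τ)⁻¹ * ∑ s ∈ Icc 1 T, a s := (mul_sum ..).symm

lemma sum_norm_sum_smul_sub_le {ι E : Type*} [Fintype ι] [DecidableEq ι] [SeminormedAddCommGroup E]
    [NormedSpace ℝ E] {M : Matrix ι ι ℝ} (hM : M ∈ doublyStochastic ℝ ι) (v : ι → E) (c : E) :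
    ∑ i, ‖∑ j, M i j • v j - c‖ ≤ ∑ j, ‖v j - c‖ := by
  obtain ⟨hM_nonneg, hM_row, hM_col⟩ := mem_doublyStochastic_iff_sum.1 hM
  have hdev : ∀ i, ∑ j, M i j • v j - c = ∑ j, M i j • (v j - c) := fun i => by
    simp only [smul_sub, sum_sub_distrib, ← sum_smul, hM_row, one_smul]
  calc ∑ i, ‖∑ j, M i j • v j - c‖
      ≤ ∑ i, ∑ j, M i j * ‖v j - c‖ := by
        gcongr with i
        rw [hdev]
        refine (norm_sum_le _ _).trans_eq (sum_congr rfl fun j _ => ?_)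
        rw [norm_smul, Real.norm_of_nonneg (hM_nonneg i j)]
    _ = ∑ j, ‖v j - c‖ := by
        rw [sum_comm]
        simp only [← sum_mul, hM_col, one_mul]

lemma transition_mem_doublyStochastic {ι : Type*} [Fintype ι] [DecidableEq ι]
    {A : ℕ → Matrix ι ι ℝ} {Φ : ℕ → ℕ → Matrix ι ι ℝ} (hA : ∀ t, 1 ≤ t → A t ∈ doublyStochastic ℝ ι)
    (hΦ_refl : ∀ s, Φ s s = 1) (hΦ_rec : ∀ t s, s ≤ t → Φ (t + 1) s = A t * Φ t s)
    {s t : ℕ} (hs : 1 ≤ s) (hst : s ≤ t) : Φ t s ∈ doublyStochastic ℝ ι := by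
  induction t, hst using Nat.le_induction with
  | base => rw [hΦ_refl]; exact one_mem _
  | succ t hst ih => rw [hΦ_rec t s hst]; exact mul_mem (hA t (hs.trans hst)) ih

lemma eq_sum_Icc_sum_transition_smul {ι E : Type*} [Fintype ι] [DecidableEq ι] [AddCommGroup E]
    [Module ℝ E] {A : ℕ → Matrix ι ι ℝ} {Φ : ℕ → ℕ → Matrix ι ι ℝ}
    (hΦ_refl : ∀ s, Φ s s = 1) (hΦ_rec : ∀ t s, s ≤ t → Φ (t + 1) s = A t * Φ t s)
    {x w : ι → ℕ → E} (hx1 : ∀ i, x i 1 = 0)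
    (hx : ∀ t, 1 ≤ t → ∀ i, x i (t + 1) = ∑ j, A t i j • x j t + w i t) (t : ℕ) (i : ι) :
    x i (t + 1) = ∑ s ∈ Icc 1 t, ∑ j, Φ (t + 1) (s + 1) i j • w j s := by
  induction t generalizing i with
  | zero => simp [hx1]
  | succ t ih =>
    rw [hx (t + 1) (Nat.le_add_left 1 t) i, sum_Icc_succ_top (Nat.le_add_left 1 t), hΦ_refl]
    congr 1
    · simp only [ih, smul_sum, smul_smul]
      rw [sum_comm]
      refine sum_congr rfl fun s hs => ?_
      rw [sum_comm]
      refine sum_congr rfl fun k _ => ?_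
      rw [← sum_smul, hΦ_rec (t + 1) (s + 1) (by simp_all), mul_apply]
    · simp [one_apply]

lemma sum_sum_smul_sub_average_eq {ι E : Type*} [Fintype ι] [AddCommGroup E] [Module ℝ E]
    {S : Finset ℕ} {P : ℕ → Matrix ι ι ℝ} (hP : ∀ s ∈ S, ∀ j, ∑ i, P s i j = 1)
    (w : ι → ℕ → E) (i : ι) :
    ∑ s ∈ S, ∑ j, P s i j • w j s - (Fintype.card ι : ℝ)⁻¹ • ∑ k, ∑ s ∈ S, ∑ j, P s k j • w j s =
      ∑ s ∈ S, ∑ j, (P s i j - (Fintype.card ι : ℝ)⁻¹) • w j s := by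
  have htotal : ∑ k, ∑ s ∈ S, ∑ j, P s k j • w j s = ∑ s ∈ S, ∑ j, w j s := by
    rw [sum_comm]
    refine sum_congr rfl fun s hs => ?_
    rw [sum_comm]
    simp only [← sum_smul, hP s hs, one_smul]
  simp only [htotal, smul_sum, sub_smul, sum_sub_distrib]

lemma norm_sub_average_le {ι E : Type*} [Fintype ι] [DecidableEq ι] [SeminormedAddCommGroup E]
    [NormedSpace ℝ E] {A : ℕ → Matrix ι ι ℝ} {Φ : ℕ → ℕ → Matrix ι ι ℝ} {K τ : ℝ}
    (hA : ∀ t, 1 ≤ t → A t ∈ doublyStochastic ℝ ι)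
    (hΦ_refl : ∀ s, Φ s s = 1) (hΦ_rec : ∀ t s, s ≤ t → Φ (t + 1) s = A t * Φ t s)
    (hΦ_bound : ∀ t s, 1 ≤ s → s ≤ t → ∀ i j,
      |Φ t s i j - (Fintype.card ι : ℝ)⁻¹| ≤ K * τ ^ (t - s))
    {x w : ι → ℕ → E} (hx1 : ∀ i, x i 1 = 0)
    (hx : ∀ t, 1 ≤ t → ∀ i, x i (t + 1) = ∑ j, A t i j • x j t + w i t)
    {b : ℕ → ℝ} (hw : ∀ s, 1 ≤ s → ∀ j, ‖w j s‖ ≤ b s) (t : ℕ) (i : ι) :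
    ‖x i (t + 1) - (Fintype.card ι : ℝ)⁻¹ • ∑ k, x k (t + 1)‖ ≤
      Fintype.card ι * ∑ s ∈ Icc 1 t, K * τ ^ (t - s) * b s := by
  have hcol : ∀ s ∈ Icc 1 t, ∀ j, ∑ i, Φ (t + 1) (s + 1) i j = 1 := fun s hs =>
    sum_col_of_mem_doublyStochastic <| transition_mem_doublyStochastic hA hΦ_refl hΦ_rec
      (Nat.le_add_left 1 s) (by simp_all)
  simp only [eq_sum_Icc_sum_transition_smul hΦ_refl hΦ_rec hx1 hx t,
    sum_sum_smul_sub_average_eq hcol, mul_sum]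
  refine (norm_sum_le _ _).trans (sum_le_sum fun s hs => (norm_sum_le _ _).trans ?_)
  rw [← nsmul_eq_mul, ← card_univ, ← sum_const]
  gcongr with j
  have hΦs := hΦ_bound (t + 1) (s + 1) (Nat.le_add_left 1 s) (by simp_all) i j
  rw [Nat.add_sub_add_right] at hΦs
  rw [norm_smul, Real.norm_eq_abs]
  exact mul_le_mul hΦs (hw s (mem_Icc.1 hs).1 j) (norm_nonneg _) ((abs_nonneg _).trans hΦs)

lemma sum_Icc_sum_norm_sub_average_le {ι E : Type*} [Fintype ι] [DecidableEq ι]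
    [SeminormedAddCommGroup E] [NormedSpace ℝ E] {A : ℕ → Matrix ι ι ℝ}
    {Φ : ℕ → ℕ → Matrix ι ι ℝ} {K τ : ℝ} (hK : 0 ≤ K) (hτ0 : 0 ≤ τ) (hτ1 : τ < 1)
    (hA : ∀ t, 1 ≤ t → A t ∈ doublyStochastic ℝ ι)
    (hΦ_refl : ∀ s, Φ s s = 1) (hΦ_rec : ∀ t s, s ≤ t → Φ (t + 1) s = A t * Φ t s)
    (hΦ_bound : ∀ t s, 1 ≤ s → s ≤ t → ∀ i j,
      |Φ t s i j - (Fintype.card ι : ℝ)⁻¹| ≤ K * τ ^ (t - s))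
    {x w : ι → ℕ → E} (hx1 : ∀ i, x i 1 = 0)
    (hx : ∀ t, 1 ≤ t → ∀ i, x i (t + 1) = ∑ j, A t i j • x j t + w i t)
    {b : ℕ → ℝ} (hb : ∀ s, 1 ≤ s → 0 ≤ b s) (hw : ∀ s, 1 ≤ s → ∀ j, ‖w j s‖ ≤ b s) (T : ℕ) :
    ∑ t ∈ Icc 1 T, ∑ i, ‖x i t - (Fintype.card ι : ℝ)⁻¹ • ∑ k, x k t‖ ≤
      Fintype.card ι ^ 2 * K * (1 - τ)⁻¹ * ∑ s ∈ Icc 1 T, b s := by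
  have hstep : ∀ t ∈ Icc 1 T, ∑ i, ‖x i t - (Fintype.card ι : ℝ)⁻¹ • ∑ k, x k t‖ ≤
      Fintype.card ι ^ 2 * K * ∑ s ∈ Icc 1 (t - 1), τ ^ (t - 1 - s) * b s := by
    intro t ht
    obtain ⟨t, rfl⟩ : ∃ t', t = t' + 1 := ⟨t - 1, by simp_all⟩
    calc ∑ i, ‖x i (t + 1) - (Fintype.card ι : ℝ)⁻¹ • ∑ k, x k (t + 1)‖
        ≤ ∑ _i : ι, Fintype.card ι * ∑ s ∈ Icc 1 t, K * τ ^ (t - s) * b s :=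
          sum_le_sum fun i _ =>
            norm_sub_average_le hA hΦ_refl hΦ_rec hΦ_bound hx1 hx hw t i
      _ = Fintype.card ι ^ 2 * K * ∑ s ∈ Icc 1 (t + 1 - 1), τ ^ (t + 1 - 1 - s) * b s := by
          simp only [sum_const, card_univ, nsmul_eq_mul, Nat.add_sub_cancel, mul_sum]
          refine sum_congr rfl fun s _ => by ring
  calc ∑ t ∈ Icc 1 T, ∑ i, ‖x i t - (Fintype.card ι : ℝ)⁻¹ • ∑ k, x k t‖
      ≤ ∑ t ∈ Icc 1 T, Fintype.card ι ^ 2 * K * ∑ s ∈ Icc 1 (t - 1), τ ^ (t - 1 - s) * b s :=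
        sum_le_sum hstep
    _ ≤ Fintype.card ι ^ 2 * K * ((1 - τ)⁻¹ * ∑ s ∈ Icc 1 T, b s) := by
        rw [← mul_sum]
        gcongr
        exact sum_Icc_sum_Icc_pow_mul_le hτ0 hτ1 hb T
    _ = Fintype.card ι ^ 2 * K * (1 - τ)⁻¹ * ∑ s ∈ Icc 1 T, b s := by ring

theorem stmt_7_general (N n T : ℕ)
    (C Chat τ : ℝ) (hC : 0 < C) (hChat : 1 < Chat) (hτ0 : 0 < τ) (hτ1 : τ < 1)
    (α γ : ℕ → ℝ)
    (hα_pos : ∀ t, 1 ≤ t → 0 < α t)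
    (A : ℕ → Matrix (Fin N) (Fin N) ℝ)
    (hA_nonneg : ∀ t, 1 ≤ t → ∀ i j, 0 ≤ A t i j)
    (hA_row : ∀ t, 1 ≤ t → ∀ i, ∑ j, A t i j = 1)
    (hA_col : ∀ t, 1 ≤ t → ∀ j, ∑ i, A t i j = 1)
    (Φ : ℕ → ℕ → Matrix (Fin N) (Fin N) ℝ)
    (hΦ_refl : ∀ s, Φ s s = 1)
    (hΦ_rec : ∀ t s, s ≤ t → Φ (t + 1) s = A t * Φ t s)
    (hΦ_bound : ∀ t s, 1 ≤ s → s ≤ t → ∀ i j,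
      |Φ t s i j - 1 / (N : ℝ)| ≤ Chat * τ ^ (t - s))
    (lam mu z : Fin N → ℕ → EuclideanSpace ℝ (Fin n))
    (hlam1 : ∀ i, lam i 1 = 0)
    (hmu : ∀ i t, 1 ≤ t → mu i t = ∑ j, A t i j • lam j t)
    (hlam : ∀ i t, 1 ≤ t → ∀ k : Fin n,
      lam i (t + 1) k = max (mu i t k + α t * (z i t k - γ t * mu i t k)) 0)
    (hz : ∀ i t, 1 ≤ t → ‖z i t - γ t • mu i t‖ ≤ 2 * C) :
    (∑ t ∈ Finset.Icc 1 T, ∑ i, ‖mu i t - (N : ℝ)⁻¹ • ∑ j, lam j t‖ ≤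
      ∑ t ∈ Finset.Icc 1 T, ∑ i, ‖lam i t - (N : ℝ)⁻¹ • ∑ j, lam j t‖) ∧
    ∑ t ∈ Finset.Icc 1 T, ∑ i, ‖lam i t - (N : ℝ)⁻¹ • ∑ j, lam j t‖ ≤
      (2 * N ^ 2 * Chat * C / (1 - τ) + 2 * N * C) * ∑ t ∈ Finset.Icc 1 T, α t := by
  have hA : ∀ t, 1 ≤ t → A t ∈ doublyStochastic ℝ (Fin N) := fun t ht =>
    mem_doublyStochastic_iff_sum.2 ⟨hA_nonneg t ht, hA_row t ht, hA_col t ht⟩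
  have hlam_nonneg : ∀ t, 1 ≤ t → ∀ i k, 0 ≤ lam i t k := by
    intro t ht
    induction t, ht using Nat.le_induction with
    | base => simp [hlam1]
    | succ t ht _ => intro i k; rw [hlam i t ht k]; exact le_max_right _ _
  have hmu_nonneg : ∀ t, 1 ≤ t → ∀ i k, 0 ≤ mu i t k := fun t ht i k => by
    rw [hmu i t ht]
    simp only [WithLp.ofLp_sum, Finset.sum_apply, PiLp.smul_apply, smul_eq_mul]
    exact sum_nonneg fun j _ => mul_nonneg (hA_nonneg t ht i j) (hlam_nonneg t ht j k)
  have hstep : ∀ t, 1 ≤ t → ∀ i, ‖lam i (t + 1) - mu i t‖ ≤ 2 * C * α t := fun t ht i =>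
    EuclideanSpace.norm_sub_le_of_eq_max_add_smul (hmu_nonneg t ht i) (hα_pos t ht).le
      (hz i t ht) fun k => by simp [hlam i t ht k]
  refine ⟨sum_le_sum fun t ht => ?_, ?_⟩
  · simpa only [hmu _ t (mem_Icc.1 ht).1] using
      sum_norm_sum_smul_sub_le (hA t (mem_Icc.1 ht).1) (fun j => lam j t) _
  have hconsensus := sum_Icc_sum_norm_sub_average_le (x := lam)
    (w := fun i t => lam i (t + 1) - mu i t) (b := fun t => 2 * C * α t)
    (zero_lt_one.trans hChat).le hτ0.le hτ1 hA hΦ_refl hΦ_rec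
    (by simpa only [Fintype.card_fin, one_div] using hΦ_bound) hlam1
    (fun t ht i => by rw [← hmu i t ht, add_sub_cancel])
    (fun t ht => by have := hα_pos t ht; positivity) hstep T
  simp only [Fintype.card_fin, ← mul_sum] at hconsensus
  have hα_sum : 0 ≤ ∑ t ∈ Icc 1 T, α t := sum_nonneg fun t ht => (hα_pos t (mem_Icc.1 ht).1).le
  calc _ ≤ _ := hconsensus
    _ = 2 * N ^ 2 * Chat * C / (1 - τ) * ∑ t ∈ Icc 1 T, α t := by ring
    _ ≤ _ := mul_le_mul_of_nonneg_right (le_add_of_nonneg_right (by positivity)) hα_sum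

/-- Cumulative consensus error of the dual variables: with
`D = 2N²ĈC/(1−τ) + 2NC`, one has
`∑_{t=1}^T ∑_i ‖μ_{i,t} − λ̄_t‖ ≤ ∑_{t=1}^T ∑_i ‖λ_{i,t} − λ̄_t‖ ≤ D ∑_{t=1}^T α_t`. -/
theorem stmt_7 (N n T : ℕ) (hN : 0 < N)
    (C Chat τ : ℝ) (hC : 0 < C) (hChat : 1 < Chat) (hτ0 : 0 < τ) (hτ1 : τ < 1)
    (α γ : ℕ → ℝ)
    (hα_pos : ∀ t, 1 ≤ t → 0 < α t)
    (hα_mono : ∀ t, 1 ≤ t → α (t + 1) ≤ α t)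
    (A : ℕ → Matrix (Fin N) (Fin N) ℝ)
    (hA_nonneg : ∀ t, 1 ≤ t → ∀ i j, 0 ≤ A t i j)
    (hA_row : ∀ t, 1 ≤ t → ∀ i, ∑ j, A t i j = 1)
    (hA_col : ∀ t, 1 ≤ t → ∀ j, ∑ i, A t i j = 1)
    (Φ : ℕ → ℕ → Matrix (Fin N) (Fin N) ℝ)
    (hΦ_refl : ∀ s, Φ s s = 1)
    (hΦ_rec : ∀ t s, s ≤ t → Φ (t + 1) s = A t * Φ t s)
    (hΦ_bound : ∀ t s, 1 ≤ s → s ≤ t → ∀ i j,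
      |Φ t s i j - 1 / (N : ℝ)| ≤ Chat * τ ^ (t - s))
    (lam mu z : Fin N → ℕ → EuclideanSpace ℝ (Fin n))
    (hlam1 : ∀ i, lam i 1 = 0)
    (hmu : ∀ i t, 1 ≤ t → mu i t = ∑ j, A t i j • lam j t)
    (hlam : ∀ i t, 1 ≤ t → ∀ k : Fin n,
      lam i (t + 1) k = max (mu i t k + α t * (z i t k - γ t * mu i t k)) 0)
    (hz : ∀ i t, 1 ≤ t → ‖z i t - γ t • mu i t‖ ≤ 2 * C) :
    (∑ t ∈ Finset.Icc 1 T, ∑ i, ‖mu i t - (N : ℝ)⁻¹ • ∑ j, lam j t‖ ≤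
      ∑ t ∈ Finset.Icc 1 T, ∑ i, ‖lam i t - (N : ℝ)⁻¹ • ∑ j, lam j t‖) ∧
    ∑ t ∈ Finset.Icc 1 T, ∑ i, ‖lam i t - (N : ℝ)⁻¹ • ∑ j, lam j t‖ ≤
      (2 * N ^ 2 * Chat * C / (1 - τ) + 2 * N * C) * ∑ t ∈ Finset.Icc 1 T, α t :=
  stmt_7_general N n T C Chat τ hC hChat hτ0 hτ1 α γ hα_pos A hA_nonneg hA_row hA_col Φ hΦ_refl
    hΦ_rec hΦ_bound lam mu z hlam1 hmu hlam hz
end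

section
/- Fix a time t and N agents. For each i let Ω_i ⊆ ℝ^{d_i} be a nonempty closed convex set with ‖x‖ ≤ η for all x ∈ Ω_i, let f_{i,t} : ℝ^{d_i} → ℝ and g_{i,t} : ℝ^{d_i} → ℝⁿ be convex (each component of g_{i,t} convex) and differentiable with ‖∇f_{i,t}(x)‖ ≤ C₂ and ‖∇g_{i,t}(x)‖ ≤ C₂ (operator norm of the n×d_i Jacobian) for all x ∈ Ω_i. Let x_{i,t} ∈ Ω_i, let μ_{i,t} ∈ ℝⁿ with μ_{i,t} ≥ 0 componentwise, set λ̄_t = (1/N)Σ_{i=1}^N μ_{i,t} (so λ̄_t ≥ 0), and let x_{i,t+1} = P_{Ω_i}[ x_{i,t} − α_t ( ∇f_{i,t}(x_{i,t}) + ∇g_{i,t}(x_{i,t})ᵀ μ_{i,t} ) ] be the Euclidean projection, with α_t > 0. Let x*_{i,t}, x*_{i,t+1} ∈ Ω_i be arbitrary. Define L_t(x, λ) = Σ_{i=1}^N f_{i,t}(x_i) + λᵀ Σ_{i=1}^N g_{i,t}(x_i) − (γ_t/2)‖λ‖² for λ ∈ ℝⁿ. Then, writing x_t = (x_{1,t},…,x_{N,t})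 and x*_t = (x*_{1,t},…,x*_{N,t}): L_t(x_t, λ̄_t) − L_t(x*_t, λ̄_t) ≤ (1/(2α_t)) Σ_{i=1}^N ( ‖x_{i,t} − x*_{i,t}‖² − ‖x_{i,t+1} − x*_{i,t+1}‖² ) + 2ηC₂ Σ_{i=1}^N ‖μ_{i,t} − λ̄_t‖ + Σ_{i=1}^N ( 3η/α_t + C₂(1 + ‖μ_{i,t}‖) ) ‖x*_{i,t} − x*_{i,t+1}‖ + α_t C₂² Σ_{i=1}^N ( 1 + ‖μ_{i,t}‖² ). -/
/-!
Work agent by agent. Convexity of `f` and of the (nonnegatively weighted) coordinates of `g`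
bounds the gap of `f + ⟪μ, g⟫` by `⟪a, x - x*⟫`, where `a` is the step direction, and
replacing the weight `μ` by `λ̄` costs at most `‖λ̄ - μ‖ · C₂ · diam Ω`. Since projecting onto a
convex set is nonexpansive, `‖x⁺ - s‖² ≤ ‖x - αa - s‖²` for every `s ∈ Ω`, which after
expanding gives the usual projected-gradient estimate
`2α⟪a, x - s⟫ ≤ ‖x - s‖² - ‖x⁺ - s‖² + α²‖a‖²`. Taking `s = x*_{t+1}` and moving back to
`x*_t` costs only terms linear in `‖x*_t - x*_{t+1}‖`, because every point of `Ω` has norm at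
most `η`. Summing over the agents gives the bound.
-/

open Set
open scoped RealInnerProductSpace

theorem ConvexOn.le_apply_of_hasFDerivAt {E : Type*} [NormedAddCommGroup E] [NormedSpace ℝ E]
    {φ : E → ℝ} {D : E →L[ℝ] ℝ} {x : E} (hφ : ConvexOn ℝ univ φ) (hD : HasFDerivAt φ D x)
    (y : E) : φ x + D (y - x) ≤ φ y := by
  let ℓ : ℝ →ᵃ[ℝ] E := AffineMap.lineMap x y
  have hderiv : HasDerivAt (φ ∘ ℓ) (D (y - x)) 0 := by
    have hD0 : HasFDerivAt φ D (ℓ 0) := by simpa [ℓ] using hD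
    exact hD0.comp_hasDerivAt 0 AffineMap.hasDerivAt_lineMap
  have hslope := (hφ.comp_affineMap ℓ).le_slope_of_hasDerivAt
    (mem_univ 0) (mem_univ 1) zero_lt_one hderiv
  simp only [slope_def_field, Function.comp_apply, ℓ, AffineMap.lineMap_apply_one,
    AffineMap.lineMap_apply_zero, sub_zero, div_one] at hslope
  linarith

theorem ConvexOn.sub_le_inner_of_hasGradientAt {F : Type*} [NormedAddCommGroup F]
    [InnerProductSpace ℝ F] [CompleteSpace F] {φ : F → ℝ} {φ' x : F}
    (hφ : ConvexOn ℝ univ φ) (hφ' : HasGradientAt φ φ' x) (y : F) :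
    φ x - φ y ≤ ⟪φ', x - y⟫ := by
  have h := hφ.le_apply_of_hasFDerivAt (hasGradientAt_iff_hasFDerivAt.mp hφ') y
  rw [InnerProductSpace.toDual_apply_apply, ← neg_sub x y, inner_neg_right] at h
  linarith

theorem inner_sub_le_inner_of_convexOn_coord {E ι : Type*} [NormedAddCommGroup E]
    [NormedSpace ℝ E] [Fintype ι] {g : E → EuclideanSpace ℝ ι} {D : E →L[ℝ] EuclideanSpace ℝ ι}
    {x : E} (hg : ∀ k, ConvexOn ℝ univ fun w => g w k) (hD : HasFDerivAt g D x)
    {μ : EuclideanSpace ℝ ι} (hμ : ∀ k, 0 ≤ μ k) (y : E) :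
    ⟪μ, g x - g y⟫ ≤ ⟪μ, D (x - y)⟫ := by
  have hcoord : ∀ k, g x k - g y k ≤ D (x - y) k := by
    intro k
    have hDk : HasFDerivAt (fun w => g w k) ((EuclideanSpace.proj k).comp D) x := by
      exact (EuclideanSpace.proj k).hasFDerivAt.comp x hD
    have h := (hg k).le_apply_of_hasFDerivAt hDk y
    rw [← neg_sub x y, ContinuousLinearMap.comp_apply, map_neg] at h
    change g x k + -D (x - y) k ≤ g y k at h
    linarith
  simp only [PiLp.inner_apply, RCLike.inner_apply, conj_trivial]
  exact Finset.sum_le_sum fun k _ => mul_le_mul_of_nonneg_right (hcoord k) (hμ k)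

theorem Convex.norm_sub_le_of_forall_norm_sub_le {F : Type*} [NormedAddCommGroup F]
    [InnerProductSpace ℝ F] {K : Set F} (hK : Convex ℝ K) {u p : F} (hp : p ∈ K)
    (hmin : ∀ w ∈ K, ‖u - p‖ ≤ ‖u - w‖) {w : F} (hw : w ∈ K) : ‖p - w‖ ≤ ‖u - w‖ := by
  have : Nonempty K := ⟨⟨p, hp⟩⟩
  have hbdd : BddBelow (range fun v : K => ‖u - v‖) := ⟨0, by rintro _ ⟨v, rfl⟩; positivity⟩
  have hinf : ‖u - p‖ = ⨅ v : K, ‖u - v‖ :=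
    le_antisymm (le_ciInf fun v => hmin v v.2) (ciInf_le hbdd ⟨p, hp⟩)
  have hvi := (norm_eq_iInf_iff_real_inner_le_zero hK hp).mp hinf w hw
  have hsplit : ‖u - w‖ ^ 2 = ‖u - p‖ ^ 2 - 2 * ⟪u - p, w - p⟫ + ‖p - w‖ ^ 2 := by
    rw [← norm_neg (p - w), neg_sub, ← norm_sub_sq_real]
    congr 2
    abel
  refine le_of_pow_le_pow_left₀ two_ne_zero (norm_nonneg _) ?_
  linarith [sq_nonneg ‖u - p‖]

theorem two_mul_inner_le_of_norm_sub_le_norm_step {F : Type*} [NormedAddCommGroup F]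
    [InnerProductSpace ℝ F] {x a p s : F} {α : ℝ} (h : ‖p - s‖ ≤ ‖x - α • a - s‖) :
    2 * α * ⟪a, x - s⟫ ≤ ‖x - s‖ ^ 2 - ‖p - s‖ ^ 2 + α ^ 2 * ‖a‖ ^ 2 := by
  have hexpand : ‖x - α • a - s‖ ^ 2 = ‖x - s‖ ^ 2 - 2 * α * ⟪a, x - s⟫ + α ^ 2 * ‖a‖ ^ 2 := by
    rw [sub_right_comm, norm_sub_sq_real, real_inner_smul_right, norm_smul, mul_pow,
      Real.norm_eq_abs, sq_abs, real_inner_comm]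
    ring
  linarith [pow_le_pow_left₀ (norm_nonneg _) h 2]

theorem norm_sub_le_two_mul {E : Type*} [SeminormedAddCommGroup E] {a b : E} {η : ℝ}
    (ha : ‖a‖ ≤ η) (hb : ‖b‖ ≤ η) : ‖a - b‖ ≤ 2 * η := by
  linarith [norm_sub_le a b]

theorem sq_norm_sub_le_sq_norm_sub_add {E : Type*} [SeminormedAddCommGroup E] {x s s' : E}
    {η : ℝ} (hx : ‖x‖ ≤ η) (hs : ‖s‖ ≤ η) (hs' : ‖s'‖ ≤ η) :
    ‖x - s'‖ ^ 2 ≤ ‖x - s‖ ^ 2 + 6 * η * ‖s - s'‖ := by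
  have htri : ‖x - s'‖ ≤ ‖x - s‖ + ‖s - s'‖ := norm_sub_le_norm_sub_add_norm_sub x s s'
  nlinarith [norm_nonneg (x - s'), norm_nonneg (s - s'), norm_sub_le_two_mul hx hs,
    norm_sub_le_two_mul hs hs']

theorem inner_sub_map_sub_le_of_norm_fderiv_le {E F : Type*} [NormedAddCommGroup E]
    [NormedSpace ℝ E] [NormedAddCommGroup F] [InnerProductSpace ℝ F] {Ω : Set E} {η C : ℝ}
    {g : E → F} {G : E → E →L[ℝ] F} {x s : E} (hΩ : Convex ℝ Ω) (hΩη : ∀ w ∈ Ω, ‖w‖ ≤ η)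
    (hg : ∀ w ∈ Ω, HasFDerivAt g (G w) w) (hGC : ∀ w ∈ Ω, ‖G w‖ ≤ C) (hx : x ∈ Ω) (hs : s ∈ Ω)
    (μ ν : F) :
    ⟪ν - μ, g x - g s⟫ ≤ 2 * η * C * ‖μ - ν‖ := by
  have hC : 0 ≤ C := (norm_nonneg _).trans (hGC x hx)
  have hLip : ‖g x - g s‖ ≤ C * ‖x - s‖ :=
    hΩ.norm_image_sub_le_of_norm_hasFDerivWithin_le (fun w hw => (hg w hw).hasFDerivWithinAt)
      hGC hs hx
  calc ⟪ν - μ, g x - g s⟫ ≤ ‖ν - μ‖ * ‖g x - g s‖ := real_inner_le_norm _ _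
    _ ≤ ‖μ - ν‖ * (C * (2 * η)) := by
      rw [norm_sub_rev]
      gcongr
      exact hLip.trans (by gcongr; exact norm_sub_le_two_mul (hΩη x hx) (hΩη s hs))
    _ = 2 * η * C * ‖μ - ν‖ := by ring

theorem Convex.inner_le_of_projected_step {F : Type*} [NormedAddCommGroup F]
    [InnerProductSpace ℝ F] {Ω : Set F} {η α : ℝ} {x a p s s' : F} (hΩ : Convex ℝ Ω)
    (hΩη : ∀ w ∈ Ω, ‖w‖ ≤ η) (hα : 0 < α) (hx : x ∈ Ω) (hs : s ∈ Ω) (hs' : s' ∈ Ω) (hp : p ∈ Ω)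
    (hmin : ∀ w ∈ Ω, ‖x - α • a - p‖ ≤ ‖x - α • a - w‖) :
    ⟪a, x - s⟫ ≤ 1 / (2 * α) * (‖x - s‖ ^ 2 - ‖p - s'‖ ^ 2) + (3 * η / α + ‖a‖) * ‖s - s'‖
      + α / 2 * ‖a‖ ^ 2 := by
  have hstep := two_mul_inner_le_of_norm_sub_le_norm_step
    (hΩ.norm_sub_le_of_forall_norm_sub_le hp hmin hs')
  have hdrift := sq_norm_sub_le_sq_norm_sub_add (hΩη x hx) (hΩη s hs) (hΩη s' hs')
  have hshift : ⟪a, x - s⟫ ≤ ⟪a, x - s'⟫ + ‖a‖ * ‖s - s'‖ := by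
    rw [show x - s = (x - s') + (s' - s) by abel, inner_add_right, norm_sub_rev s]
    linarith [real_inner_le_norm a (s' - s)]
  have hmain : ⟪a, x - s'⟫ ≤ 1 / (2 * α) * (‖x - s‖ ^ 2 - ‖p - s'‖ ^ 2)
      + 3 * η / α * ‖s - s'‖ + α / 2 * ‖a‖ ^ 2 := by
    rw [show 1 / (2 * α) * (‖x - s‖ ^ 2 - ‖p - s'‖ ^ 2) + 3 * η / α * ‖s - s'‖
        + α / 2 * ‖a‖ ^ 2 = (‖x - s‖ ^ 2 - ‖p - s'‖ ^ 2 + 6 * η * ‖s - s'‖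
          + α ^ 2 * ‖a‖ ^ 2) / (2 * α) by field_simp; ring,
      le_div_iff₀ (by positivity)]
    linarith
  linarith

theorem lagrangian_gap_le_of_projected_gradient_step {E ι : Type*} [NormedAddCommGroup E]
    [InnerProductSpace ℝ E] [CompleteSpace E] [Fintype ι] {Ω : Set E} {η C α : ℝ} {f : E → ℝ}
    {g : E → EuclideanSpace ℝ ι} {f' : E} {G : E → E →L[ℝ] EuclideanSpace ℝ ι} {x p s s' : E}
    {μ ν : EuclideanSpace ℝ ι} (hΩ : Convex ℝ Ω) (hΩη : ∀ w ∈ Ω, ‖w‖ ≤ η) (hα : 0 < α)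
    (hf : ConvexOn ℝ univ f) (hg : ∀ k, ConvexOn ℝ univ fun w => g w k)
    (hf' : HasGradientAt f f' x) (hg' : ∀ w, HasFDerivAt g (G w) w) (hf'C : ‖f'‖ ≤ C)
    (hGC : ∀ w ∈ Ω, ‖G w‖ ≤ C) (hx : x ∈ Ω) (hs : s ∈ Ω) (hs' : s' ∈ Ω) (hp : p ∈ Ω)
    (hμ : ∀ k, 0 ≤ μ k)
    (hmin : ∀ w ∈ Ω, ‖(x - α • (f' + ContinuousLinearMap.adjoint (G x) μ)) - p‖ ≤
      ‖(x - α • (f' + ContinuousLinearMap.adjoint (G x) μ)) - w‖) :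
    f x - f s + ⟪ν, g x - g s⟫ ≤
      1 / (2 * α) * (‖x - s‖ ^ 2 - ‖p - s'‖ ^ 2)
      + 2 * η * C * ‖μ - ν‖
      + (3 * η / α + C * (1 + ‖μ‖)) * ‖s - s'‖
      + α * C ^ 2 * (1 + ‖μ‖ ^ 2) := by
  set a := f' + ContinuousLinearMap.adjoint (G x) μ
  have hdescent : f x - f s + ⟪μ, g x - g s⟫ ≤ ⟪a, x - s⟫ := by
    have hgs := inner_sub_le_inner_of_convexOn_coord hg (hg' x) hμ s
    rw [← ContinuousLinearMap.adjoint_inner_left] at hgs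
    rw [inner_add_left]
    linarith [hf.sub_le_inner_of_hasGradientAt hf' s]
  have hsplit : ⟪ν, g x - g s⟫ = ⟪μ, g x - g s⟫ + ⟪ν - μ, g x - g s⟫ := by
    rw [← inner_add_left, add_sub_cancel]
  have hmult := inner_sub_map_sub_le_of_norm_fderiv_le hΩ hΩη (fun w _ => hg' w) hGC hx hs μ ν
  have ha : ‖a‖ ≤ C * (1 + ‖μ‖) := by
    calc ‖a‖ ≤ ‖f'‖ + ‖G x‖ * ‖μ‖ := by
          refine (norm_add_le _ _).trans ?_
          gcongr
          rw [← LinearIsometryEquiv.norm_map ContinuousLinearMap.adjoint (G x)]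
          exact (ContinuousLinearMap.adjoint (G x)).le_opNorm μ
      _ ≤ C + C * ‖μ‖ := by gcongr; exact hGC x hx
      _ = C * (1 + ‖μ‖) := by ring
  have ha_sq : α / 2 * ‖a‖ ^ 2 ≤ α * C ^ 2 * (1 + ‖μ‖ ^ 2) := by
    have : ‖a‖ ^ 2 ≤ 2 * C ^ 2 * (1 + ‖μ‖ ^ 2) := by
      nlinarith [pow_le_pow_left₀ (norm_nonneg a) ha 2, sq_nonneg (1 - ‖μ‖)]
    nlinarith
  have hproj := hΩ.inner_le_of_projected_step hΩη hα hx hs hs' hp hmin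
  linarith [mul_le_mul_of_nonneg_right ha (norm_nonneg (s - s'))]

theorem stmt_8_general (N n : ℕ)
    (d : Fin N → ℕ)
    (Ω : ∀ i : Fin N, Set (EuclideanSpace ℝ (Fin (d i))))
    (hΩ_convex : ∀ i, Convex ℝ (Ω i))
    (η C₂ α γ : ℝ) (hα : 0 < α)
    (hΩ_bd : ∀ i, ∀ w ∈ Ω i, ‖w‖ ≤ η)
    (f : ∀ i : Fin N, EuclideanSpace ℝ (Fin (d i)) → ℝ)
    (g : ∀ i : Fin N, EuclideanSpace ℝ (Fin (d i)) → EuclideanSpace ℝ (Fin n))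
    (f' : ∀ i : Fin N, EuclideanSpace ℝ (Fin (d i)) → EuclideanSpace ℝ (Fin (d i)))
    (g' : ∀ i : Fin N, EuclideanSpace ℝ (Fin (d i)) →
      (EuclideanSpace ℝ (Fin (d i)) →L[ℝ] EuclideanSpace ℝ (Fin n)))
    (hf_convex : ∀ i, ConvexOn ℝ Set.univ (f i))
    (hg_convex : ∀ i (k : Fin n), ConvexOn ℝ Set.univ (fun w => g i w k))
    (hf' : ∀ i w, HasGradientAt (f i) (f' i w) w)
    (hg' : ∀ i w, HasFDerivAt (g i) (g' i w) w)
    (hf'_bd : ∀ i, ∀ w ∈ Ω i, ‖f' i w‖ ≤ C₂)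
    (hg'_bd : ∀ i, ∀ w ∈ Ω i, ‖g' i w‖ ≤ C₂)
    (x xnext xstar xstarnext : ∀ i : Fin N, EuclideanSpace ℝ (Fin (d i)))
    (hx : ∀ i, x i ∈ Ω i)
    (hxstar : ∀ i, xstar i ∈ Ω i)
    (hxstarnext : ∀ i, xstarnext i ∈ Ω i)
    (μ : Fin N → EuclideanSpace ℝ (Fin n))
    (hμ_nonneg : ∀ i (k : Fin n), 0 ≤ μ i k)
    -- `xnext i` is the Euclidean projection of the gradient step onto `Ω i`
    (hproj : ∀ i, xnext i ∈ Ω i ∧ ∀ w ∈ Ω i,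
      ‖(x i - α • (f' i (x i) + ContinuousLinearMap.adjoint (g' i (x i)) (μ i))) - xnext i‖ ≤
      ‖(x i - α • (f' i (x i) + ContinuousLinearMap.adjoint (g' i (x i)) (μ i))) - w‖) :
    ((∑ i, f i (x i)) + (inner ℝ ((N : ℝ)⁻¹ • ∑ i, μ i) (∑ i, g i (x i)) : ℝ)
        - γ / 2 * ‖(N : ℝ)⁻¹ • ∑ i, μ i‖ ^ 2)
      - ((∑ i, f i (xstar i)) + (inner ℝ ((N : ℝ)⁻¹ • ∑ i, μ i) (∑ i, g i (xstar i)) : ℝ)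
        - γ / 2 * ‖(N : ℝ)⁻¹ • ∑ i, μ i‖ ^ 2) ≤
      1 / (2 * α) * ∑ i, (‖x i - xstar i‖ ^ 2 - ‖xnext i - xstarnext i‖ ^ 2)
      + 2 * η * C₂ * ∑ i, ‖μ i - (N : ℝ)⁻¹ • ∑ j, μ j‖
      + ∑ i, (3 * η / α + C₂ * (1 + ‖μ i‖)) * ‖xstar i - xstarnext i‖
      + α * C₂ ^ 2 * ∑ i, (1 + ‖μ i‖ ^ 2) := by
  set lbar := (N : ℝ)⁻¹ • ∑ i, μ i
  have hagent i := lagrangian_gap_le_of_projected_gradient_step (ν := lbar) (hΩ_convex i)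
    (hΩ_bd i) hα (hf_convex i) (hg_convex i) (hf' i (x i)) (hg' i) (hf'_bd i _ (hx i))
    (hg'_bd i) (hx i) (hxstar i) (hxstarnext i) (hproj i).1 (hμ_nonneg i) (hproj i).2
  calc _ = ∑ i, (f i (x i) - f i (xstar i) + ⟪lbar, g i (x i) - g i (xstar i)⟫) := by
        simp only [inner_sum, inner_sub_right, Finset.sum_add_distrib, Finset.sum_sub_distrib]
        ring
    _ ≤ _ := Finset.sum_le_sum fun i _ => hagent i
    _ = _ := by simp only [Finset.mul_sum, ← Finset.sum_add_distrib]

/-- One-step primal inequality for the regularized Lagrangian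
`L_t(x, λ) = ∑_i f_{i,t}(x_i) + λᵀ ∑_i g_{i,t}(x_i) − (γ_t/2)‖λ‖²`: if
`x_{i,t+1} = P_{Ω_i}[x_{i,t} − α_t(∇f_{i,t}(x_{i,t}) + ∇g_{i,t}(x_{i,t})ᵀ μ_{i,t})]` and
`λ̄_t = (1/N) ∑_i μ_{i,t}` with `μ_{i,t} ≥ 0`, then
`L_t(x_t, λ̄_t) − L_t(x*_t, λ̄_t)` is bounded by the stated sum of four terms. -/
theorem stmt_8 (N n : ℕ) (hN : 0 < N)
    (d : Fin N → ℕ)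
    (Ω : ∀ i : Fin N, Set (EuclideanSpace ℝ (Fin (d i))))
    (hΩ_ne : ∀ i, (Ω i).Nonempty)
    (hΩ_closed : ∀ i, IsClosed (Ω i))
    (hΩ_convex : ∀ i, Convex ℝ (Ω i))
    (η C₂ α γ : ℝ) (hη : 0 < η) (hC₂ : 0 < C₂) (hα : 0 < α) (hγ : 0 < γ)
    (hΩ_bd : ∀ i, ∀ w ∈ Ω i, ‖w‖ ≤ η)
    (f : ∀ i : Fin N, EuclideanSpace ℝ (Fin (d i)) → ℝ)
    (g : ∀ i : Fin N, EuclideanSpace ℝ (Fin (d i)) → EuclideanSpace ℝ (Fin n))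
    (f' : ∀ i : Fin N, EuclideanSpace ℝ (Fin (d i)) → EuclideanSpace ℝ (Fin (d i)))
    (g' : ∀ i : Fin N, EuclideanSpace ℝ (Fin (d i)) →
      (EuclideanSpace ℝ (Fin (d i)) →L[ℝ] EuclideanSpace ℝ (Fin n)))
    (hf_convex : ∀ i, ConvexOn ℝ Set.univ (f i))
    (hg_convex : ∀ i (k : Fin n), ConvexOn ℝ Set.univ (fun w => g i w k))
    (hf' : ∀ i w, HasGradientAt (f i) (f' i w) w)
    (hg' : ∀ i w, HasFDerivAt (g i) (g' i w) w)
    (hf'_bd : ∀ i, ∀ w ∈ Ω i, ‖f' i w‖ ≤ C₂)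
    (hg'_bd : ∀ i, ∀ w ∈ Ω i, ‖g' i w‖ ≤ C₂)
    (x xnext xstar xstarnext : ∀ i : Fin N, EuclideanSpace ℝ (Fin (d i)))
    (hx : ∀ i, x i ∈ Ω i)
    (hxstar : ∀ i, xstar i ∈ Ω i)
    (hxstarnext : ∀ i, xstarnext i ∈ Ω i)
    (μ : Fin N → EuclideanSpace ℝ (Fin n))
    (hμ_nonneg : ∀ i (k : Fin n), 0 ≤ μ i k)
    -- `xnext i` is the Euclidean projection of the gradient step onto `Ω i`
    (hproj : ∀ i, xnext i ∈ Ω i ∧ ∀ w ∈ Ω i,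
      ‖(x i - α • (f' i (x i) + ContinuousLinearMap.adjoint (g' i (x i)) (μ i))) - xnext i‖ ≤
      ‖(x i - α • (f' i (x i) + ContinuousLinearMap.adjoint (g' i (x i)) (μ i))) - w‖) :
    ((∑ i, f i (x i)) + (inner ℝ ((N : ℝ)⁻¹ • ∑ i, μ i) (∑ i, g i (x i)) : ℝ)
        - γ / 2 * ‖(N : ℝ)⁻¹ • ∑ i, μ i‖ ^ 2)
      - ((∑ i, f i (xstar i)) + (inner ℝ ((N : ℝ)⁻¹ • ∑ i, μ i) (∑ i, g i (xstar i)) : ℝ)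
        - γ / 2 * ‖(N : ℝ)⁻¹ • ∑ i, μ i‖ ^ 2) ≤
      1 / (2 * α) * ∑ i, (‖x i - xstar i‖ ^ 2 - ‖xnext i - xstarnext i‖ ^ 2)
      + 2 * η * C₂ * ∑ i, ‖μ i - (N : ℝ)⁻¹ • ∑ j, μ j‖
      + ∑ i, (3 * η / α + C₂ * (1 + ‖μ i‖)) * ‖xstar i - xstarnext i‖
      + α * C₂ ^ 2 * ∑ i, (1 + ‖μ i‖ ^ 2) :=
  stmt_8_general N n d Ω hΩ_convex η C₂ α γ hα hΩ_bd f g f' g' hf_convex hg_convex hf' hg' hf'_bd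
    hg'_bd x xnext xstar xstarnext hx hxstar hxstarnext μ hμ_nonneg hproj
end

section
/- Fix a time t and N agents. Let A(t) and A(t+1) be N×N doubly stochastic matrices, C > 0, α_t > 0, γ_t > 0. Suppose μ_{i,t}, λ_{i,t+1}, μ_{i,t+1}, z_{i,t} ∈ ℝⁿ satisfy λ_{i,t+1} = [ μ_{i,t} + α_t ( z_{i,t} − γ_t μ_{i,t} ) ]₊, μ_{i,t+1} = Σ_{j=1}^N a_{ij}(t+1) λ_{j,t+1}, ‖z_{i,t}‖ ≤ C and γ_t ‖μ_{i,t}‖ ≤ C for all i, and (1/N) Σ_{i=1}^N z_{i,t} = Σ_{i=1}^N g_{i,t}(x_{i,t}), where x_{i,t} ∈ Ω_i ⊆ ℝ^{d_i} and g_{i,t} : ℝ^{d_i} → ℝⁿ. Set λ̄_t = (1/N) Σ_{i=1}^N μ_{i,t} and define L_t(x, λ) = Σ_{i=1}^N f_{i,t}(x_i) + λᵀ Σ_{i=1}^N g_{i,t}(x_i) − (γ_t/2)‖λ‖². Then for every λ ∈ ℝⁿ with λ ≥ 0 componentwise, writing x_t = (x_{1,t},…,x_{N,t}): L_t(x_t,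 λ) − L_t(x_t, λ̄_t) ≤ (1/(2Nα_t)) Σ_{i=1}^N ( ‖μ_{i,t} − λ‖² − ‖μ_{i,t+1} − λ‖² ) + (2C/N) Σ_{i=1}^N ‖μ_{i,t} − λ̄_t‖ + (α_t/(2N)) Σ_{i=1}^N ( 2C² + 2γ_t² ‖μ_{i,t}‖² ). -/
/-!
The map `λ ↦ L_t(x_t, λ)` is concave, so `L_t(x_t, λ) - L_t(x_t, λ̄_t)` is at most the
average over the agents of `L_t(x_t, λ) - L_t(x_t, μ_i)`, and each of these is bounded by the
supergradient term `⟪G - γ μ_i, λ - μ_i⟫`, where `G = ∑ g_i(x_i)`. Replacing `G` by the local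
estimate `z_i` costs `⟪G - z_i, λ - μ_i⟫`; since the `z_i` average to `G`, these errors sum to
zero against any fixed vector, so `λ` may be replaced by `λ̄_t`, after which each error is at
most `2C ‖μ_i - λ̄_t‖`. What is left is the projected-ascent estimate (projecting onto the
nonnegative orthant moves no point farther from `λ ≥ 0`), and the doubly stochastic mixing
`μ_{t+1} = A λ_{t+1}` does not increase `∑_i ‖· - λ‖²`.
-/

open Finset
open scoped RealInnerProductSpace

section Convexity

variable {E : Type*} [NormedAddCommGroup E] [NormedSpace ℝ E] {ι : Type*}

lemma convexOn_univ_norm_sq : ConvexOn ℝ Set.univ (fun x : E => ‖x‖ ^ 2) :=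
  convexOn_univ_norm.pow (fun _ _ => norm_nonneg _) 2

lemma norm_sum_smul_sq_le {s : Finset ι} {w : ι → ℝ} (hw₀ : ∀ i ∈ s, 0 ≤ w i)
    (hw₁ : ∑ i ∈ s, w i = 1) (v : ι → E) :
    ‖∑ i ∈ s, w i • v i‖ ^ 2 ≤ ∑ i ∈ s, w i * ‖v i‖ ^ 2 :=
  convexOn_univ_norm_sq.map_sum_le hw₀ hw₁ fun _ _ => Set.mem_univ _

lemma sum_norm_sum_smul_sub_sq_le [Fintype ι] [DecidableEq ι] {A : Matrix ι ι ℝ}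
    (hA : A ∈ doublyStochastic ℝ ι) (v : ι → E) (c : E) :
    ∑ i, ‖∑ j, A i j • v j - c‖ ^ 2 ≤ ∑ j, ‖v j - c‖ ^ 2 := by
  have hcentre : ∀ i, ∑ j, A i j • v j - c = ∑ j, A i j • (v j - c) := fun i => by
    simp only [smul_sub, sum_sub_distrib, ← sum_smul, sum_row_of_mem_doublyStochastic hA,
      one_smul]
  calc ∑ i, ‖∑ j, A i j • v j - c‖ ^ 2
      ≤ ∑ i, ∑ j, A i j * ‖v j - c‖ ^ 2 := by
        gcongr with i
        rw [hcentre]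
        exact norm_sum_smul_sq_le (fun j _ => nonneg_of_mem_doublyStochastic hA)
          (sum_row_of_mem_doublyStochastic hA i) _
    _ = ∑ j, ‖v j - c‖ ^ 2 := by
        rw [sum_comm]
        simp only [← sum_mul, sum_col_of_mem_doublyStochastic hA, one_mul]

lemma sum_inv_card_eq_one [Fintype ι] [Nonempty ι] :
    ∑ _i : ι, (Fintype.card ι : ℝ)⁻¹ = 1 := by
  simp [card_univ]

lemma norm_average_le [Fintype ι] [Nonempty ι] {C : ℝ} {z : ι → E} (hz : ∀ i, ‖z i‖ ≤ C) :
    ‖(Fintype.card ι : ℝ)⁻¹ • ∑ i, z i‖ ≤ C := by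
  have hmem := (convex_closedBall (0 : E) C).sum_mem (t := univ)
    (fun _ _ => by positivity)
    sum_inv_card_eq_one fun i _ => mem_closedBall_zero_iff.2 (hz i)
  rwa [← smul_sum, mem_closedBall_zero_iff] at hmem

lemma ConcaveOn.sub_map_average_le [Fintype ι] [Nonempty ι] {φ : E → ℝ}
    (hφ : ConcaveOn ℝ Set.univ φ) (u : E) (v : ι → E) :
    φ u - φ ((Fintype.card ι : ℝ)⁻¹ • ∑ i, v i)
      ≤ (Fintype.card ι : ℝ)⁻¹ * ∑ i, (φ u - φ (v i)) := by
  have hJensen := hφ.le_map_sum (t := univ) (p := v) (fun _ _ => by positivity)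
    sum_inv_card_eq_one fun _ _ => Set.mem_univ _
  simp only [smul_eq_mul] at hJensen
  rw [smul_sum, mul_sum]
  simp only [mul_sub, sum_sub_distrib]
  rw [← sum_mul, sum_inv_card_eq_one, one_mul]
  linarith

end Convexity

section InnerProduct

variable {E : Type*} [NormedAddCommGroup E] [InnerProductSpace ℝ E] {ι : Type*}

lemma concaveOn_inner_sub_norm_sq (G : E) {γ : ℝ} (hγ : 0 ≤ γ) :
    ConcaveOn ℝ Set.univ (fun u : E => ⟪u, G⟫ - γ / 2 * ‖u‖ ^ 2) := by
  have hlin : ConcaveOn ℝ Set.univ (fun u : E => ⟪u, G⟫) := by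
    refine ((innerₛₗ ℝ G).concaveOn convex_univ).congr fun u _ => ?_
    simp [real_inner_comm]
  exact hlin.sub (convexOn_univ_norm_sq.smul (by positivity))

lemma inner_sub_norm_sq_sub_le (G u v : E) {γ : ℝ} (hγ : 0 ≤ γ) :
    (⟪u, G⟫ - γ / 2 * ‖u‖ ^ 2) - (⟪v, G⟫ - γ / 2 * ‖v‖ ^ 2) ≤ ⟪G - γ • v, u - v⟫ := by
  have hexpand : ⟪G - γ • v, u - v⟫
      = (⟪u, G⟫ - γ / 2 * ‖u‖ ^ 2) - (⟪v, G⟫ - γ / 2 * ‖v‖ ^ 2) + γ / 2 * ‖u - v‖ ^ 2 := by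
    rw [norm_sub_sq_real, inner_sub_left, inner_sub_right, inner_sub_right,
      real_inner_smul_left, real_inner_smul_left, real_inner_self_eq_norm_sq,
      real_inner_comm G u, real_inner_comm G v, real_inner_comm u v]
    ring
  have hcurv : 0 ≤ γ / 2 * ‖u - v‖ ^ 2 := by positivity
  linarith

lemma inner_le_of_norm_sub_le_norm_add_smul_sub {α : ℝ} (hα : 0 < α) {μ w p c : E}
    (hp : ‖p - c‖ ≤ ‖μ + α • w - c‖) :
    ⟪w, c - μ⟫ ≤ (2 * α)⁻¹ * (‖μ - c‖ ^ 2 - ‖p - c‖ ^ 2) + α / 2 * ‖w‖ ^ 2 := by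
  have hexpand :
      ‖μ + α • w - c‖ ^ 2 = ‖μ - c‖ ^ 2 - 2 * α * ⟪w, c - μ⟫ + α ^ 2 * ‖w‖ ^ 2 := by
    rw [show μ + α • w - c = (μ - c) + α • w by abel, norm_add_sq_real, norm_smul,
      real_inner_smul_right, Real.norm_of_nonneg hα.le, real_inner_comm,
      show μ - c = -(c - μ) by abel, inner_neg_right]
    ring
  have hsq := pow_le_pow_left₀ (norm_nonneg _) hp 2
  rw [show (2 * α)⁻¹ * (‖μ - c‖ ^ 2 - ‖p - c‖ ^ 2) + α / 2 * ‖w‖ ^ 2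
      = (2 * α)⁻¹ * (‖μ - c‖ ^ 2 - ‖p - c‖ ^ 2 + α ^ 2 * ‖w‖ ^ 2) by field_simp,
    le_inv_mul_iff₀ (by positivity)]
  linarith

lemma norm_posPart_sub_le [Fintype ι] {a p c : EuclideanSpace ℝ ι}
    (hp : ∀ k, p k = max (a k) 0) (hc : ∀ k, 0 ≤ c k) : ‖p - c‖ ≤ ‖a - c‖ := by
  rw [← sq_le_sq₀ (norm_nonneg _) (norm_nonneg _), EuclideanSpace.norm_sq_eq,
    EuclideanSpace.norm_sq_eq]
  gcongr with k
  simpa [hp k, max_eq_left (hc k)] using abs_max_sub_max_le_abs (a k) (c k) 0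

lemma sum_inner_average_sub_le [Fintype ι] [Nonempty ι] {C : ℝ} {z : ι → E}
    (hz : ∀ i, ‖z i‖ ≤ C) (μ : ι → E) (u : E) :
    ∑ i, ⟪(Fintype.card ι : ℝ)⁻¹ • ∑ j, z j - z i, u - μ i⟫
      ≤ 2 * C * ∑ i, ‖μ i - (Fintype.card ι : ℝ)⁻¹ • ∑ j, μ j‖ := by
  set G := (Fintype.card ι : ℝ)⁻¹ • ∑ j, z j
  set m := (Fintype.card ι : ℝ)⁻¹ • ∑ j, μ j
  have hbalanced : ∑ i, (G - z i) = 0 := by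
    rw [sum_sub_distrib, sum_const, card_univ, ← Nat.cast_smul_eq_nsmul ℝ, smul_smul,
      mul_inv_cancel₀ (by positivity), one_smul, sub_self]
  have hshift : ∑ i, ⟪G - z i, u - μ i⟫ = ∑ i, ⟪G - z i, m - μ i⟫ := by
    have hsplit : ∀ i, u - μ i = (u - m) + (m - μ i) := fun i => by abel
    simp only [hsplit, inner_add_right, sum_add_distrib, ← sum_inner, hbalanced,
      inner_zero_left, zero_add]
  rw [hshift, mul_sum]
  gcongr with i
  calc ⟪G - z i, m - μ i⟫ ≤ ‖G - z i‖ * ‖m - μ i‖ := real_inner_le_norm _ _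
    _ ≤ 2 * C * ‖μ i - m‖ := by
      rw [norm_sub_rev m]
      gcongr
      linarith [norm_sub_le G (z i), norm_average_le hz, hz i]

lemma inner_le_of_projected_dual_step [Fintype ι] {α γ C : ℝ} (hα : 0 < α) (hγ : 0 ≤ γ)
    {μ z p c : EuclideanSpace ℝ ι} (hp : ∀ k, p k = max (μ k + α * (z k - γ * μ k)) 0)
    (hz : ‖z‖ ≤ C) (hc : ∀ k, 0 ≤ c k) :
    ⟪z - γ • μ, c - μ⟫
      ≤ (2 * α)⁻¹ * (‖μ - c‖ ^ 2 - ‖p - c‖ ^ 2)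
        + α / 2 * (2 * C ^ 2 + 2 * γ ^ 2 * ‖μ‖ ^ 2) := by
  have hproj : ‖p - c‖ ≤ ‖μ + α • (z - γ • μ) - c‖ :=
    norm_posPart_sub_le (fun k => by simp [hp k]) hc
  have hgrad : ‖z - γ • μ‖ ^ 2 ≤ 2 * C ^ 2 + 2 * γ ^ 2 * ‖μ‖ ^ 2 :=
    calc ‖z - γ • μ‖ ^ 2 ≤ (‖z‖ + γ * ‖μ‖) ^ 2 := by
          gcongr
          simpa [norm_smul, abs_of_nonneg hγ] using norm_sub_le z (γ • μ)
      _ ≤ 2 * (‖z‖ ^ 2 + (γ * ‖μ‖) ^ 2) := add_sq_le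
      _ ≤ 2 * C ^ 2 + 2 * γ ^ 2 * ‖μ‖ ^ 2 := by
          have hz_sq : ‖z‖ ^ 2 ≤ C ^ 2 := by gcongr
          nlinarith
  calc ⟪z - γ • μ, c - μ⟫
      ≤ (2 * α)⁻¹ * (‖μ - c‖ ^ 2 - ‖p - c‖ ^ 2) + α / 2 * ‖z - γ • μ‖ ^ 2 :=
        inner_le_of_norm_sub_le_norm_add_smul_sub hα hproj
    _ ≤ _ := by gcongr

end InnerProduct

theorem stmt_9_general (N n : ℕ) (hN : 0 < N)
    (d : Fin N → ℕ)
    (C α γ : ℝ) (hα : 0 < α) (hγ : 0 < γ)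
    (A' : Matrix (Fin N) (Fin N) ℝ)
    (hA'_nonneg : ∀ i j, 0 ≤ A' i j)
    (hA'_row : ∀ i, ∑ j, A' i j = 1)
    (hA'_col : ∀ j, ∑ i, A' i j = 1)
    (f : ∀ i : Fin N, EuclideanSpace ℝ (Fin (d i)) → ℝ)
    (g : ∀ i : Fin N, EuclideanSpace ℝ (Fin (d i)) → EuclideanSpace ℝ (Fin n))
    (x : ∀ i : Fin N, EuclideanSpace ℝ (Fin (d i)))
    (μ lamnext μnext z : Fin N → EuclideanSpace ℝ (Fin n))
    (hlamnext : ∀ i (k : Fin n),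
      lamnext i k = max (μ i k + α * (z i k - γ * μ i k)) 0)
    (hμnext : ∀ i, μnext i = ∑ j, A' i j • lamnext j)
    (hz_bd : ∀ i, ‖z i‖ ≤ C)
    (hz_avg : (N : ℝ)⁻¹ • ∑ i, z i = ∑ i, g i (x i)) :
    ∀ lam : EuclideanSpace ℝ (Fin n), (∀ k : Fin n, 0 ≤ lam k) →
      ((∑ i, f i (x i)) + (inner ℝ lam (∑ i, g i (x i)) : ℝ) - γ / 2 * ‖lam‖ ^ 2)
        - ((∑ i, f i (x i)) + (inner ℝ ((N : ℝ)⁻¹ • ∑ i, μ i) (∑ i, g i (x i)) : ℝ)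
          - γ / 2 * ‖(N : ℝ)⁻¹ • ∑ i, μ i‖ ^ 2) ≤
      1 / (2 * N * α) * ∑ i, (‖μ i - lam‖ ^ 2 - ‖μnext i - lam‖ ^ 2)
      + 2 * C / N * ∑ i, ‖μ i - (N : ℝ)⁻¹ • ∑ j, μ j‖
      + α / (2 * N) * ∑ i, (2 * C ^ 2 + 2 * γ ^ 2 * ‖μ i‖ ^ 2) := by
  intro lam hlam
  have : Nonempty (Fin N) := ⟨⟨0, hN⟩⟩
  set G := ∑ i, g i (x i)
  set φ : EuclideanSpace ℝ (Fin n) → ℝ := fun u => ⟪u, G⟫ - γ / 2 * ‖u‖ ^ 2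
  have hconcave :
      φ lam - φ ((N : ℝ)⁻¹ • ∑ i, μ i) ≤ (N : ℝ)⁻¹ * ∑ i, (φ lam - φ (μ i)) := by
    have hJensen := (concaveOn_inner_sub_norm_sq G hγ.le).sub_map_average_le lam μ
    rwa [Fintype.card_fin] at hJensen
  have hdisagree :
      ∑ i, ⟪G - z i, lam - μ i⟫ ≤ 2 * C * ∑ i, ‖μ i - (N : ℝ)⁻¹ • ∑ j, μ j‖ := by
    simpa [hz_avg] using sum_inner_average_sub_le hz_bd μ lam
  have hmix : ∑ i, ‖μnext i - lam‖ ^ 2 ≤ ∑ i, ‖lamnext i - lam‖ ^ 2 := by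
    simpa only [hμnext] using sum_norm_sum_smul_sub_sq_le
      (mem_doublyStochastic_iff_sum.2 ⟨hA'_nonneg, hA'_row, hA'_col⟩) lamnext lam
  have hagent : ∀ i, φ lam - φ (μ i) ≤
      (2 * α)⁻¹ * (‖μ i - lam‖ ^ 2 - ‖lamnext i - lam‖ ^ 2)
        + α / 2 * (2 * C ^ 2 + 2 * γ ^ 2 * ‖μ i‖ ^ 2) + ⟪G - z i, lam - μ i⟫ := fun i => by
    have hsplit : ⟪G - γ • μ i, lam - μ i⟫
        = ⟪z i - γ • μ i, lam - μ i⟫ + ⟪G - z i, lam - μ i⟫ := by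
      rw [← inner_add_left, sub_add_sub_cancel']
    dsimp only [φ]
    linarith [inner_sub_norm_sq_sub_le G lam (μ i) hγ.le,
      inner_le_of_projected_dual_step hα hγ.le (hlamnext i) (hz_bd i) hlam]
  calc _ = φ lam - φ ((N : ℝ)⁻¹ • ∑ i, μ i) := by ring
    _ ≤ (N : ℝ)⁻¹ * ∑ i, ((2 * α)⁻¹ * (‖μ i - lam‖ ^ 2 - ‖lamnext i - lam‖ ^ 2)
        + α / 2 * (2 * C ^ 2 + 2 * γ ^ 2 * ‖μ i‖ ^ 2) + ⟪G - z i, lam - μ i⟫) := by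
      refine hconcave.trans ?_
      gcongr with i
      exact hagent i
    _ ≤ (N : ℝ)⁻¹ * ((2 * α)⁻¹ * ∑ i, (‖μ i - lam‖ ^ 2 - ‖μnext i - lam‖ ^ 2)
        + 2 * C * ∑ i, ‖μ i - (N : ℝ)⁻¹ • ∑ j, μ j‖
        + α / 2 * ∑ i, (2 * C ^ 2 + 2 * γ ^ 2 * ‖μ i‖ ^ 2)) := by
      gcongr
      simp only [sum_add_distrib, ← mul_sum, sum_sub_distrib]
      have hstep : (0 : ℝ) ≤ (2 * α)⁻¹ := by positivity
      linarith [mul_le_mul_of_nonneg_left hmix hstep]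
    _ = _ := by ring

/-- One-step dual inequality for the regularized Lagrangian
`L_t(x, λ) = ∑_i f_{i,t}(x_i) + λᵀ ∑_i g_{i,t}(x_i) − (γ_t/2)‖λ‖²`: with the dual update
`λ_{i,t+1} = [μ_{i,t} + α_t(z_{i,t} − γ_t μ_{i,t})]₊`, `μ_{i,t+1} = ∑_j a_{ij}(t+1) λ_{j,t+1}`,
`‖z_{i,t}‖ ≤ C`, `γ_t‖μ_{i,t}‖ ≤ C` and `(1/N)∑_i z_{i,t} = ∑_i g_{i,t}(x_{i,t})`, for every
`λ ≥ 0` the difference `L_t(x_t, λ) − L_t(x_t, λ̄_t)` is bounded by the stated three terms. -/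
theorem stmt_9 (N n : ℕ) (hN : 0 < N)
    (d : Fin N → ℕ)
    (Ω : ∀ i : Fin N, Set (EuclideanSpace ℝ (Fin (d i))))
    (C α γ : ℝ) (hC : 0 < C) (hα : 0 < α) (hγ : 0 < γ)
    (A' : Matrix (Fin N) (Fin N) ℝ)
    (hA'_nonneg : ∀ i j, 0 ≤ A' i j)
    (hA'_row : ∀ i, ∑ j, A' i j = 1)
    (hA'_col : ∀ j, ∑ i, A' i j = 1)
    (f : ∀ i : Fin N, EuclideanSpace ℝ (Fin (d i)) → ℝ)
    (g : ∀ i : Fin N, EuclideanSpace ℝ (Fin (d i)) → EuclideanSpace ℝ (Fin n))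
    (x : ∀ i : Fin N, EuclideanSpace ℝ (Fin (d i)))
    (hx : ∀ i, x i ∈ Ω i)
    (μ lamnext μnext z : Fin N → EuclideanSpace ℝ (Fin n))
    (hlamnext : ∀ i (k : Fin n),
      lamnext i k = max (μ i k + α * (z i k - γ * μ i k)) 0)
    (hμnext : ∀ i, μnext i = ∑ j, A' i j • lamnext j)
    (hz_bd : ∀ i, ‖z i‖ ≤ C)
    (hμ_bd : ∀ i, γ * ‖μ i‖ ≤ C)
    (hz_avg : (N : ℝ)⁻¹ • ∑ i, z i = ∑ i, g i (x i)) :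
    ∀ lam : EuclideanSpace ℝ (Fin n), (∀ k : Fin n, 0 ≤ lam k) →
      ((∑ i, f i (x i)) + (inner ℝ lam (∑ i, g i (x i)) : ℝ) - γ / 2 * ‖lam‖ ^ 2)
        - ((∑ i, f i (x i)) + (inner ℝ ((N : ℝ)⁻¹ • ∑ i, μ i) (∑ i, g i (x i)) : ℝ)
          - γ / 2 * ‖(N : ℝ)⁻¹ • ∑ i, μ i‖ ^ 2) ≤
      1 / (2 * N * α) * ∑ i, (‖μ i - lam‖ ^ 2 - ‖μnext i - lam‖ ^ 2)
      + 2 * C / N * ∑ i, ‖μ i - (N : ℝ)⁻¹ • ∑ j, μ j‖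
      + α / (2 * N) * ∑ i, (2 * C ^ 2 + 2 * γ ^ 2 * ‖μ i‖ ^ 2) :=
  stmt_9_general N n hN d C α γ hα hγ A' hA'_nonneg hA'_row hA'_col f g x μ lamnext μnext z hlamnext
    hμnext hz_bd hz_avg
end
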